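/- arXiv:1512.00405 — 5 statements merged into one kernel-verified Lean document; each statement's English description precedes it below -/
import Mathlib

section
/- For the Manhart relative normalizations with support functions ⁽ᵅ⁾q = |K|^α (α ∈ ℝ), the associated tangent field satisfies ⁽ᵅ⁾Q̄ = α·T̄_EUK, and the corresponding Tchebychev vector satisfies ⁽ᵅ⁾T̄ = |K|^α·(1 − α(n+2))·T̄_EUK. In particular ⁽ᵅ⁾T̄ = 0 identically for the equiaffine choice α = 1/(n+2). -/
/-- Partial derivative of a scalar function on `ℝⁿ`. -/
noncomputable def pd {n : ℕ} (f : EuclideanSpace ℝ (Fin n) → ℝ) (i : Fin n)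
    (u : EuclideanSpace ℝ (Fin n)) : ℝ :=
  fderiv ℝ f u (EuclideanSpace.single i 1)

/-- Partial derivative of a vector-valued function on `ℝⁿ`. -/
noncomputable def pdv {n m : ℕ}
    (f : EuclideanSpace ℝ (Fin n) → EuclideanSpace ℝ (Fin m)) (i : Fin n)
    (u : EuclideanSpace ℝ (Fin n)) : EuclideanSpace ℝ (Fin m) :=
  fderiv ℝ f u (EuclideanSpace.single i 1)

/-- The III-gradient tangent vector `∇^{III}(f, ξ̄) = −h^{ij} f_{/i} x̄_{/j}`
(expressed via the Weingarten equations). -/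
noncomputable def gradIII {n : ℕ}
    (hinv : EuclideanSpace ℝ (Fin n) → Matrix (Fin n) (Fin n) ℝ)
    (x : EuclideanSpace ℝ (Fin n) → EuclideanSpace ℝ (Fin (n + 1)))
    (f : EuclideanSpace ℝ (Fin n) → ℝ) (u : EuclideanSpace ℝ (Fin n)) :
    EuclideanSpace ℝ (Fin (n + 1)) :=
  -(∑ i, ∑ j, (hinv u i j * pd f i u) • pdv x j u)

/-! The III-gradient depends on its argument only through the differential, so the chain rule
gives `∇^{III}(|f|^α) = (α |f|^α / f) ∇^{III} f`, i.e. `α |f|^α ∇^{III}(ln |f|)`. For `q = |K|^α`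
the factor `|K|^α` cancels against the normalisation `1 / (2 n q)`, leaving `Q̄ = α T̄_EUK`;
the formula for `T̄` is then linear algebra. -/

lemma hasDerivAt_abs_rpow_of_ne_zero (α : ℝ) {c : ℝ} (hc : c ≠ 0) :
    HasDerivAt (fun t : ℝ => |t| ^ α) (α * |c| ^ α / c) c := by
  convert (hasDerivAt_abs hc).rpow_const (p := α) (Or.inl (abs_ne_zero.mpr hc)) using 1
  rw [Real.rpow_sub_one (abs_ne_zero.mpr hc)]
  rcases hc.lt_or_gt with h | h
  · simp only [abs_of_neg h, sign_neg h, SignType.coe_neg, SignType.coe_one, neg_mul, one_mul]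
    field_simp
  · simp only [abs_of_pos h, sign_pos h, SignType.coe_one, one_mul]
    field_simp

section ChainRule

variable {n : ℕ} {f : EuclideanSpace ℝ (Fin n) → ℝ} {u : EuclideanSpace ℝ (Fin n)}
  {g : ℝ → ℝ} {g' : ℝ}

lemma pd_comp (hg : HasDerivAt g g' (f u)) (hf : DifferentiableAt ℝ f u) (i : Fin n) :
    pd (g ∘ f) i u = g' * pd f i u := by
  simp [pd, (hg.comp_hasFDerivAt u hf.hasFDerivAt).fderiv]

lemma gradIII_comp (hinv : EuclideanSpace ℝ (Fin n) → Matrix (Fin n) (Fin n) ℝ)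
    (x : EuclideanSpace ℝ (Fin n) → EuclideanSpace ℝ (Fin (n + 1)))
    (hg : HasDerivAt g g' (f u)) (hf : DifferentiableAt ℝ f u) :
    gradIII hinv x (g ∘ f) u = g' • gradIII hinv x f u := by
  simp only [gradIII, pd_comp hg hf, smul_neg, Finset.smul_sum, smul_smul]
  congr 1
  refine Finset.sum_congr rfl fun i _ => Finset.sum_congr rfl fun j _ => ?_
  rw [mul_left_comm]

lemma gradIII_abs_rpow (hinv : EuclideanSpace ℝ (Fin n) → Matrix (Fin n) (Fin n) ℝ)
    (x : EuclideanSpace ℝ (Fin n) → EuclideanSpace ℝ (Fin (n + 1))) (α : ℝ)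
    (hf : DifferentiableAt ℝ f u) (hfu : f u ≠ 0) :
    gradIII hinv x (fun v => |f v| ^ α) u = (α * |f u| ^ α / f u) • gradIII hinv x f u :=
  gradIII_comp (g := fun t => |t| ^ α) hinv x (hasDerivAt_abs_rpow_of_ne_zero α hfu) hf

end ChainRule

theorem manhart_normalization_tchebychev_general {n : ℕ}
    (U : Set (EuclideanSpace ℝ (Fin n))) (hUo : IsOpen U)
    (x : EuclideanSpace ℝ (Fin n) → EuclideanSpace ℝ (Fin (n + 1)))
    (hinv : EuclideanSpace ℝ (Fin n) → Matrix (Fin n) (Fin n) ℝ)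
    (K : EuclideanSpace ℝ (Fin n) → ℝ)
    (hK : ContDiffOn ℝ 1 K U) (hK0 : ∀ u ∈ U, K u ≠ 0) (α : ℝ)
    (TEUK Qa Ta : EuclideanSpace ℝ (Fin n) → EuclideanSpace ℝ (Fin (n + 1)))
    (hTEUK : ∀ u ∈ U, TEUK u = (1 / (2 * (n : ℝ) * K u)) • gradIII hinv x K u)
    (hQa : ∀ u ∈ U, Qa u = (1 / (2 * (n : ℝ) * |K u| ^ α)) •
        gradIII hinv x (fun v => |K v| ^ α) u)
    (hTa : ∀ u ∈ U, Ta u = (|K u| ^ α) • TEUK u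
        - (|K u| ^ α * ((n : ℝ) + 2)) • Qa u) :
    ∀ u ∈ U, Qa u = α • TEUK u ∧
      Ta u = (|K u| ^ α * (1 - α * ((n : ℝ) + 2))) • TEUK u ∧
      (α = 1 / ((n : ℝ) + 2) → Ta u = 0) := by
  intro u hu
  have hKu : K u ≠ 0 := hK0 u hu
  have hKα : |K u| ^ α ≠ 0 := (Real.rpow_pos_of_pos (abs_pos.mpr hKu) α).ne'
  have hdK : DifferentiableAt ℝ K u :=
    (hK.differentiableOn one_ne_zero).differentiableAt (hUo.mem_nhds hu)
  have hQ : Qa u = α • TEUK u := by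
    rw [hQa u hu, hTEUK u hu, gradIII_abs_rpow hinv x α hdK hKu, smul_smul, smul_smul]
    field_simp
  have hT : Ta u = (|K u| ^ α * (1 - α * ((n : ℝ) + 2))) • TEUK u := by
    rw [hTa u hu, hQ, smul_smul, ← sub_smul]
    ring_nf
  refine ⟨hQ, hT, fun hα => ?_⟩
  rw [hT, hα, one_div_mul_cancel (by positivity), sub_self, mul_zero, zero_smul]

/-- for the Manhart normalizations with support functions
`⁽ᵅ⁾q = |K|^α`, the tangent field satisfies `⁽ᵅ⁾Q̄ = α·T̄_EUK`, the Tchebychev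
field satisfies `⁽ᵅ⁾T̄ = |K|^α·(1 − α(n+2))·T̄_EUK`, and in particular
`⁽ᵅ⁾T̄ = 0` for the equiaffine choice `α = 1/(n+2)`. -/
theorem manhart_normalization_tchebychev {n : ℕ} (hn : 0 < n)
    (U : Set (EuclideanSpace ℝ (Fin n))) (hUo : IsOpen U)
    (x : EuclideanSpace ℝ (Fin n) → EuclideanSpace ℝ (Fin (n + 1)))
    (hinv : EuclideanSpace ℝ (Fin n) → Matrix (Fin n) (Fin n) ℝ)
    (K : EuclideanSpace ℝ (Fin n) → ℝ)
    (hK : ContDiffOn ℝ 1 K U) (hK0 : ∀ u ∈ U, K u ≠ 0) (α : ℝ)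
    (TEUK Qa Ta : EuclideanSpace ℝ (Fin n) → EuclideanSpace ℝ (Fin (n + 1)))
    (hTEUK : ∀ u ∈ U, TEUK u = (1 / (2 * (n : ℝ) * K u)) • gradIII hinv x K u)
    (hQa : ∀ u ∈ U, Qa u = (1 / (2 * (n : ℝ) * |K u| ^ α)) •
        gradIII hinv x (fun v => |K v| ^ α) u)
    (hTa : ∀ u ∈ U, Ta u = (|K u| ^ α) • TEUK u
        - (|K u| ^ α * ((n : ℝ) + 2)) • Qa u) :
    ∀ u ∈ U, Qa u = α • TEUK u ∧
      Ta u = (|K u| ^ α * (1 - α * ((n : ℝ) + 2))) • TEUK u ∧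
      (α = 1 / ((n : ℝ) + 2) → Ta u = 0) :=
  manhart_normalization_tchebychev_general U hUo x hinv K hK hK0 α TEUK Qa Ta hTEUK hQa hTa
end

section
/- With q_AFF := |K|^{1/(n+2)} and ȳ_AFF the corresponding (equiaffine) relative normalization, the following are equivalent for two relative normalizations with support functions q₁, q₂ and Tchebychev fields T̄₁, T̄₂: (a) T̄₂ = α·T̄₁ for some constant α; (b) |q₂ − α q₁| = λ·q_AFF for some constant λ ≥ 0; (c) ȳ₂ = α·ȳ₁ + μ·ȳ_AFF for some constant μ. -/
open scoped RealInnerProductSpace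

/-- Relative normalization `ȳ = ∇^{III}(q, ξ̄) + q ξ̄`. -/
noncomputable def relNor {n : ℕ}
    (hinv : EuclideanSpace ℝ (Fin n) → Matrix (Fin n) (Fin n) ℝ)
    (x ξ : EuclideanSpace ℝ (Fin n) → EuclideanSpace ℝ (Fin (n + 1)))
    (q : EuclideanSpace ℝ (Fin n) → ℝ) (u : EuclideanSpace ℝ (Fin n)) :
    EuclideanSpace ℝ (Fin (n + 1)) :=
  gradIII hinv x q u + q u • ξ u

/-- Tchebychev field `T̄ = q·T̄_EUK − ((n+2)/(2n))·∇^{III}(q, ξ̄)`. -/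
noncomputable def tcheb {n : ℕ}
    (hinv : EuclideanSpace ℝ (Fin n) → Matrix (Fin n) (Fin n) ℝ)
    (x : EuclideanSpace ℝ (Fin n) → EuclideanSpace ℝ (Fin (n + 1)))
    (K q : EuclideanSpace ℝ (Fin n) → ℝ) (u : EuclideanSpace ℝ (Fin n)) :
    EuclideanSpace ℝ (Fin (n + 1)) :=
  (q u / (2 * (n : ℝ) * K u)) • gradIII hinv x K u
    - (((n : ℝ) + 2) / (2 * (n : ℝ))) • gradIII hinv x q u

/-!
Both `T̄` and `ȳ` depend linearly on the 1-jet of the support function, so with `g = q₂ − α q₁`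
condition (a) says `T̄(g) = 0`. As the `x̄_{/j}` are independent and `(h^{ij})` is invertible,
`∇^{III}` is injective on differentials, and `T̄(g) = 0` becomes the PDE `g dK = (n+2) K dg`, i.e.
`d(g |K|^{-1/(n+2)}) = 0`; on a connected domain its solutions are `g = c |K|^{1/(n+2)}`.
A continuous function with `|g| = λ q_AFF`, `λ > 0`, has no zero and hence constant sign, which
gives (b). The normal component of `ȳ(f)` is `f`, so `ȳ(f) = 0` on an open set iff `f = 0` there,
which gives (c).
-/

noncomputable def gradIIIOfDiff {n : ℕ} {F : Type*} [AddCommGroup F] [Module ℝ F]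
    (M : Matrix (Fin n) (Fin n) ℝ) (w : Fin n → F) :
    (EuclideanSpace ℝ (Fin n) →L[ℝ] ℝ) →ₗ[ℝ] F :=
  -(Fintype.linearCombination ℝ w ∘ₗ M.vecMulLinear ∘ₗ
    LinearMap.pi fun i => (ContinuousLinearMap.apply ℝ ℝ (EuclideanSpace.single i 1)).toLinearMap)

theorem gradIIIOfDiff_injective {n : ℕ} {F : Type*} [AddCommGroup F] [Module ℝ F]
    {M N : Matrix (Fin n) (Fin n) ℝ} {w : Fin n → F} (hNM : N * M = 1)
    (hw : LinearIndependent ℝ w) : Function.Injective (gradIIIOfDiff M w) := by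
  have hcoord : Function.Injective fun (L : EuclideanSpace ℝ (Fin n) →L[ℝ] ℝ) i =>
      L (EuclideanSpace.single i 1) := fun L₁ L₂ h =>
    ContinuousLinearMap.coe_injective <|
      (EuclideanSpace.basisFun (Fin n) ℝ).toBasis.ext fun i => by simpa using congrFun h i
  exact neg_injective.comp <|
    (linearIndependent_iff_injective_fintypeLinearCombination.mp hw).comp <|
      (Matrix.vecMul_injective_of_isUnit (IsUnit.of_mul_eq_one_right N hNM)).comp hcoord

theorem gradIII_eq_gradIIIOfDiff {n : ℕ}
    (hinv : EuclideanSpace ℝ (Fin n) → Matrix (Fin n) (Fin n) ℝ)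
    (x : EuclideanSpace ℝ (Fin n) → EuclideanSpace ℝ (Fin (n + 1)))
    (f : EuclideanSpace ℝ (Fin n) → ℝ) (u : EuclideanSpace ℝ (Fin n)) :
    gradIII hinv x f u = gradIIIOfDiff (hinv u) (pdv x · u) (fderiv ℝ f u) := by
  simp only [gradIII, pd, gradIIIOfDiff, LinearMap.neg_apply, LinearMap.coe_comp,
    Function.comp_apply, Matrix.coe_vecMulLinear, Fintype.linearCombination_apply, Matrix.vecMul,
    dotProduct, LinearMap.pi_apply, ContinuousLinearMap.coe_coe, ContinuousLinearMap.apply_apply,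
    mul_comm, Finset.sum_smul, neg_inj]
  rw [Finset.sum_comm]

theorem tcheb_eq_gradIIIOfDiff {n : ℕ}
    (hinv : EuclideanSpace ℝ (Fin n) → Matrix (Fin n) (Fin n) ℝ)
    (x : EuclideanSpace ℝ (Fin n) → EuclideanSpace ℝ (Fin (n + 1)))
    (K q : EuclideanSpace ℝ (Fin n) → ℝ) (u : EuclideanSpace ℝ (Fin n)) :
    tcheb hinv x K q u = gradIIIOfDiff (hinv u) (pdv x · u)
      ((q u / (2 * n * K u)) • fderiv ℝ K u - (((n : ℝ) + 2) / (2 * n)) • fderiv ℝ q u) := by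
  simp only [tcheb, gradIII_eq_gradIIIOfDiff, map_sub, map_smul]

theorem tcheb_sub_smul {n : ℕ}
    (hinv : EuclideanSpace ℝ (Fin n) → Matrix (Fin n) (Fin n) ℝ)
    (x : EuclideanSpace ℝ (Fin n) → EuclideanSpace ℝ (Fin (n + 1)))
    {K q₁ q₂ : EuclideanSpace ℝ (Fin n) → ℝ} {u : EuclideanSpace ℝ (Fin n)}
    (hq₁ : DifferentiableAt ℝ q₁ u) (hq₂ : DifferentiableAt ℝ q₂ u) (α : ℝ) :
    tcheb hinv x K q₂ u - α • tcheb hinv x K q₁ u =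
      tcheb hinv x K (fun v => q₂ v - α * q₁ v) u := by
  rw [tcheb_eq_gradIIIOfDiff, tcheb_eq_gradIIIOfDiff, tcheb_eq_gradIIIOfDiff, ← map_smul,
    ← map_sub, fderiv_fun_sub hq₂ (hq₁.const_mul α), fderiv_const_mul hq₁]
  congr 1
  module

theorem tcheb_eq_zero_iff {n : ℕ} (hn : n ≠ 0)
    {hinv h : EuclideanSpace ℝ (Fin n) → Matrix (Fin n) (Fin n) ℝ}
    {x : EuclideanSpace ℝ (Fin n) → EuclideanSpace ℝ (Fin (n + 1))}
    {K : EuclideanSpace ℝ (Fin n) → ℝ} (q : EuclideanSpace ℝ (Fin n) → ℝ)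
    {u : EuclideanSpace ℝ (Fin n)} (hhinv : h u * hinv u = 1)
    (hind : LinearIndependent ℝ (pdv x · u)) (hK : K u ≠ 0) :
    tcheb hinv x K q u = 0 ↔ (1 / ((n : ℝ) + 2) * q u) • fderiv ℝ K u = K u • fderiv ℝ q u := by
  have hn' : (n : ℝ) ≠ 0 := Nat.cast_ne_zero.mpr hn
  have hn2 : (n : ℝ) + 2 ≠ 0 := by positivity
  have ht : 2 * n * K u / (n + 2) ≠ 0 := by positivity
  rw [tcheb_eq_gradIIIOfDiff, ← map_zero (gradIIIOfDiff (hinv u) (pdv x · u)),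
    (gradIIIOfDiff_injective hhinv hind).eq_iff, sub_eq_zero,
    ← (smul_right_injective _ ht).eq_iff, smul_smul, smul_smul]
  have h₁ : 2 * n * K u / (n + 2) * (q u / (2 * n * K u)) = 1 / (n + 2) * q u := by
    field_simp
  have h₂ : 2 * n * K u / (n + 2) * ((n + 2) / (2 * n)) = K u := by
    field_simp
  rw [h₁, h₂]

theorem hasFDerivAt_abs_rpow {E : Type*} [NormedAddCommGroup E] [NormedSpace ℝ E]
    {K : E → ℝ} {K' : E →L[ℝ] ℝ} {u : E} (p : ℝ) (hK : HasFDerivAt K K' u) (hK0 : K u ≠ 0) :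
    HasFDerivAt (fun v => |K v| ^ p) ((p * |K u| ^ p / K u) • K') u := by
  convert (hK.abs hK0).rpow_const (p := p) (Or.inl (abs_ne_zero.mpr hK0)) using 1
  rw [smul_smul, Real.rpow_sub_one (abs_ne_zero.mpr hK0)]
  congr 1
  rcases hK0.lt_or_gt with hneg | hpos
  · rw [abs_of_neg hneg, sign_neg hneg]
    field_simp
    simp
  · rw [abs_of_pos hpos, sign_pos hpos]
    field_simp
    simp

theorem smul_fderiv_eq_iff_exists_eq_mul_abs_rpow {E : Type*} [NormedAddCommGroup E]
    [NormedSpace ℝ E] {U : Set E} (hUo : IsOpen U) (hUc : IsPreconnected U) {K g : E → ℝ}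
    (hK : DifferentiableOn ℝ K U) (hK0 : ∀ u ∈ U, K u ≠ 0) (hg : DifferentiableOn ℝ g U)
    (p : ℝ) :
    (∀ u ∈ U, (p * g u) • fderiv ℝ K u = K u • fderiv ℝ g u) ↔
      ∃ c, ∀ u ∈ U, g u = c * |K u| ^ p := by
  have hK' : ∀ u ∈ U, HasFDerivAt K (fderiv ℝ K u) u := fun u hu =>
    (hK.differentiableAt (hUo.mem_nhds hu)).hasFDerivAt
  have hg' : ∀ u ∈ U, HasFDerivAt g (fderiv ℝ g u) u := fun u hu =>
    (hg.differentiableAt (hUo.mem_nhds hu)).hasFDerivAt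
  constructor
  · intro hpde
    -- `g |K|^{-p}` has zero differential, hence is constant on `U`.
    have hφ : ∀ u ∈ U, HasFDerivAt (fun v => g v * |K v| ^ (-p)) (0 : E →L[ℝ] ℝ) u := by
      intro u hu
      have hprod := (hg' u hu).mul (hasFDerivAt_abs_rpow (-p) (hK' u hu) (hK0 u hu))
      have hsplit : g u • ((-p * |K u| ^ (-p) / K u) • fderiv ℝ K u)
            + |K u| ^ (-p) • fderiv ℝ g u
          = (|K u| ^ (-p) / K u) • (K u • fderiv ℝ g u - (p * g u) • fderiv ℝ K u) := by
        rw [smul_sub, smul_smul, smul_smul, div_mul_cancel₀ _ (hK0 u hu)]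
        module
      rwa [hsplit, hpde u hu, sub_self, smul_zero] at hprod
    obtain ⟨c, hc⟩ := hUo.exists_is_const_of_fderiv_eq_zero hUc
      (fun u hu => (hφ u hu).differentiableAt.differentiableWithinAt)
      (fun u hu => (hφ u hu).fderiv)
    refine ⟨c, fun u hu => ?_⟩
    rw [← hc u hu, mul_assoc, ← Real.rpow_add (abs_pos.mpr (hK0 u hu)), neg_add_cancel,
      Real.rpow_zero, mul_one]
  · rintro ⟨c, hc⟩ u hu
    have hgc : g =ᶠ[nhds u] fun v => c * |K v| ^ p :=
      Filter.eventually_of_mem (hUo.mem_nhds hu) hc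
    rw [(((hasFDerivAt_abs_rpow p (hK' u hu) (hK0 u hu)).const_mul c).congr_of_eventuallyEq
      hgc).fderiv, smul_smul, smul_smul, hc u hu]
    congr 1
    field_simp [hK0 u hu]

theorem exists_abs_eq_mul_iff_exists_eq_mul {α : Type*} [TopologicalSpace α] {U : Set α}
    (hU : IsPreconnected U) {g k : α → ℝ} (hg : ContinuousOn g U) (hk : ContinuousOn k U)
    (hk0 : ∀ u ∈ U, 0 < k u) :
    (∃ l, 0 ≤ l ∧ ∀ u ∈ U, |g u| = l * k u) ↔ ∃ c, ∀ u ∈ U, g u = c * k u := by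
  constructor
  · rintro ⟨l, hl, hgl⟩
    rcases hl.eq_or_lt with rfl | hl
    · exact ⟨0, fun u hu => by simpa using hgl u hu⟩
    rcases hU.eq_or_eq_neg_of_sq_eq hg (continuousOn_const (c := l) |>.mul hk)
        (fun u hu => by simp [← sq_abs (g u), hgl u hu])
        (fun hu => (mul_pos hl (hk0 _ hu)).ne') with h | h
    · exact ⟨l, h⟩
    · exact ⟨-l, fun u hu => by simpa using h hu⟩
  · rintro ⟨c, hc⟩
    exact ⟨|c|, abs_nonneg c, fun u hu => by rw [hc u hu, abs_mul, abs_of_pos (hk0 u hu)]⟩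

theorem inner_relNor_normal {n : ℕ}
    (hinv : EuclideanSpace ℝ (Fin n) → Matrix (Fin n) (Fin n) ℝ)
    {x ξ : EuclideanSpace ℝ (Fin n) → EuclideanSpace ℝ (Fin (n + 1))}
    (f : EuclideanSpace ℝ (Fin n) → ℝ) {u : EuclideanSpace ℝ (Fin n)}
    (hξo : ∀ i, ⟪ξ u, pdv x i u⟫ = 0) (hξn : ‖ξ u‖ = 1) :
    ⟪relNor hinv x ξ f u, ξ u⟫ = f u := by
  have htan : ⟪gradIII hinv x f u, ξ u⟫ = 0 := by
    simp [gradIII, sum_inner, real_inner_comm, real_inner_smul_right, hξo]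
  rw [relNor, inner_add_left, htan, real_inner_smul_left, real_inner_self_eq_norm_sq, hξn]
  simp

theorem relNor_eq_smul_add_smul {n : ℕ}
    (hinv : EuclideanSpace ℝ (Fin n) → Matrix (Fin n) (Fin n) ℝ)
    (x ξ : EuclideanSpace ℝ (Fin n) → EuclideanSpace ℝ (Fin (n + 1)))
    {f f₁ f₂ : EuclideanSpace ℝ (Fin n) → ℝ} {u : EuclideanSpace ℝ (Fin n)} {a b : ℝ}
    (hf : f u = a * f₁ u + b * f₂ u)
    (hf' : fderiv ℝ f u = a • fderiv ℝ f₁ u + b • fderiv ℝ f₂ u) :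
    relNor hinv x ξ f u = a • relNor hinv x ξ f₁ u + b • relNor hinv x ξ f₂ u := by
  simp only [relNor, gradIII_eq_gradIIIOfDiff, hf, hf', map_add, map_smul]
  module

theorem relNor_eq_smul_add_smul_iff {n : ℕ} {U : Set (EuclideanSpace ℝ (Fin n))} (hUo : IsOpen U)
    (hinv : EuclideanSpace ℝ (Fin n) → Matrix (Fin n) (Fin n) ℝ)
    {x ξ : EuclideanSpace ℝ (Fin n) → EuclideanSpace ℝ (Fin (n + 1))}
    (hξo : ∀ u ∈ U, ∀ i, ⟪ξ u, pdv x i u⟫ = 0) (hξn : ∀ u ∈ U, ‖ξ u‖ = 1)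
    {f f₁ f₂ : EuclideanSpace ℝ (Fin n) → ℝ} (hf₁ : DifferentiableOn ℝ f₁ U)
    (hf₂ : DifferentiableOn ℝ f₂ U) (a b : ℝ) :
    (∀ u ∈ U, relNor hinv x ξ f u = a • relNor hinv x ξ f₁ u + b • relNor hinv x ξ f₂ u) ↔
      ∀ u ∈ U, f u = a * f₁ u + b * f₂ u := by
  constructor
  · intro hrel u hu
    have := congrArg (⟪·, ξ u⟫) (hrel u hu)
    simpa only [inner_add_left, real_inner_smul_left,
      inner_relNor_normal hinv _ (hξo u hu) (hξn u hu)] using this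
  · intro hval u hu
    have hloc : f =ᶠ[nhds u] fun v => a * f₁ v + b * f₂ v :=
      Filter.eventually_of_mem (hUo.mem_nhds hu) hval
    refine relNor_eq_smul_add_smul hinv x ξ (hval u hu) ?_
    have hd₁ := hf₁.differentiableAt (hUo.mem_nhds hu)
    have hd₂ := hf₂.differentiableAt (hUo.mem_nhds hu)
    rw [hloc.fderiv_eq, fderiv_fun_add (hd₁.const_mul a) (hd₂.const_mul b), fderiv_const_mul hd₁,
      fderiv_const_mul hd₂]

theorem tchebychev_proportional_iff_general {n : ℕ} (hn : 0 < n)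
    (U : Set (EuclideanSpace ℝ (Fin n))) (hUo : IsOpen U) (hUc : IsConnected U)
    (x ξ : EuclideanSpace ℝ (Fin n) → EuclideanSpace ℝ (Fin (n + 1)))
    (hinv h : EuclideanSpace ℝ (Fin n) → Matrix (Fin n) (Fin n) ℝ)
    (K q₁ q₂ : EuclideanSpace ℝ (Fin n) → ℝ)
    (hind : ∀ u ∈ U, LinearIndependent ℝ (fun j : Fin n => pdv x j u))
    (hξo : ∀ u ∈ U, ∀ i, ⟪ξ u, pdv x i u⟫ = 0)
    (hξn : ∀ u ∈ U, ‖ξ u‖ = 1)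
    (hhinv : ∀ u ∈ U, h u * hinv u = 1)
    (hK : ContDiffOn ℝ 1 K U) (hK0 : ∀ u ∈ U, K u ≠ 0)
    (hq₁ : ContDiffOn ℝ 1 q₁ U)
    (hq₂ : ContDiffOn ℝ 1 q₂ U)
    (α : ℝ) :
    ((∀ u ∈ U, tcheb hinv x K q₂ u = α • tcheb hinv x K q₁ u) ↔
        ∃ l : ℝ, 0 ≤ l ∧ ∀ u ∈ U,
          |q₂ u - α * q₁ u| = l * |K u| ^ (1 / ((n : ℝ) + 2))) ∧
      ((∀ u ∈ U, tcheb hinv x K q₂ u = α • tcheb hinv x K q₁ u) ↔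
        ∃ μ : ℝ, ∀ u ∈ U, relNor hinv x ξ q₂ u
          = α • relNor hinv x ξ q₁ u
            + μ • relNor hinv x ξ (fun v => |K v| ^ (1 / ((n : ℝ) + 2))) u) := by
  have hK' := hK.differentiableOn one_ne_zero
  have hq₁' := hq₁.differentiableOn one_ne_zero
  have hq₂' := hq₂.differentiableOn one_ne_zero
  have hqAff : DifferentiableOn ℝ (fun v => |K v| ^ (1 / ((n : ℝ) + 2))) U := fun u hu =>
    (hasFDerivAt_abs_rpow _ (hK'.differentiableAt (hUo.mem_nhds hu)).hasFDerivAt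
      (hK0 u hu)).differentiableAt.differentiableWithinAt
  have hg : DifferentiableOn ℝ (fun v => q₂ v - α * q₁ v) U := hq₂'.sub (hq₁'.const_mul α)
  have hpde : (∀ u ∈ U, tcheb hinv x K q₂ u = α • tcheb hinv x K q₁ u) ↔
      ∃ c, ∀ u ∈ U, q₂ u - α * q₁ u = c * |K u| ^ (1 / ((n : ℝ) + 2)) := by
    rw [← smul_fderiv_eq_iff_exists_eq_mul_abs_rpow hUo hUc.isPreconnected hK' hK0 hg]
    refine forall₂_congr fun u hu => ?_
    rw [← sub_eq_zero, tcheb_sub_smul hinv x (hq₁'.differentiableAt (hUo.mem_nhds hu))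
      (hq₂'.differentiableAt (hUo.mem_nhds hu)), tcheb_eq_zero_iff hn.ne' _ (hhinv u hu)
      (hind u hu) (hK0 u hu)]
  refine ⟨hpde.trans (exists_abs_eq_mul_iff_exists_eq_mul hUc.isPreconnected hg.continuousOn
    hqAff.continuousOn fun u hu => Real.rpow_pos_of_pos (abs_pos.mpr (hK0 u hu)) _).symm,
    hpde.trans ?_⟩
  refine exists_congr fun μ => ?_
  rw [relNor_eq_smul_add_smul_iff hUo hinv hξo hξn hq₁' hqAff]
  exact forall₂_congr fun u _ => sub_eq_iff_eq_add'

/-- with `q_AFF := |K|^{1/(n+2)}` and `ȳ_AFF` the equiaffine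
normalization, for two relative normalizations with nowhere-zero support
functions `q₁, q₂` the following are equivalent on a connected domain:
(a) `T̄₂ = α·T̄₁` for some constant `α`; (b) `|q₂ − αq₁| = λ·q_AFF` for some
`λ ≥ 0`; (c) `ȳ₂ = α·ȳ₁ + μ·ȳ_AFF` for some constant `μ`. -/
theorem tchebychev_proportional_iff {n : ℕ} (hn : 0 < n)
    (U : Set (EuclideanSpace ℝ (Fin n))) (hUo : IsOpen U) (hUc : IsConnected U)
    (x ξ : EuclideanSpace ℝ (Fin n) → EuclideanSpace ℝ (Fin (n + 1)))
    (hinv h : EuclideanSpace ℝ (Fin n) → Matrix (Fin n) (Fin n) ℝ)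
    (K q₁ q₂ : EuclideanSpace ℝ (Fin n) → ℝ)
    (hind : ∀ u ∈ U, LinearIndependent ℝ (fun j : Fin n => pdv x j u))
    (hξo : ∀ u ∈ U, ∀ i, ⟪ξ u, pdv x i u⟫ = 0)
    (hξn : ∀ u ∈ U, ‖ξ u‖ = 1)
    (hhinv : ∀ u ∈ U, h u * hinv u = 1)
    (hK : ContDiffOn ℝ 1 K U) (hK0 : ∀ u ∈ U, K u ≠ 0)
    (hq₁ : ContDiffOn ℝ 1 q₁ U) (hq₁0 : ∀ u ∈ U, q₁ u ≠ 0)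
    (hq₂ : ContDiffOn ℝ 1 q₂ U) (hq₂0 : ∀ u ∈ U, q₂ u ≠ 0)
    (α : ℝ) :
    ((∀ u ∈ U, tcheb hinv x K q₂ u = α • tcheb hinv x K q₁ u) ↔
        ∃ l : ℝ, 0 ≤ l ∧ ∀ u ∈ U,
          |q₂ u - α * q₁ u| = l * |K u| ^ (1 / ((n : ℝ) + 2))) ∧
      ((∀ u ∈ U, tcheb hinv x K q₂ u = α • tcheb hinv x K q₁ u) ↔
        ∃ μ : ℝ, ∀ u ∈ U, relNor hinv x ξ q₂ u
          = α • relNor hinv x ξ q₁ u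
            + μ • relNor hinv x ξ (fun v => |K v| ^ (1 / ((n : ℝ) + 2))) u) :=
  tchebychev_proportional_iff_general hn U hUo hUc x ξ hinv h K q₁ q₂ hind hξo hξn hhinv hK hK0 hq₁
    hq₂ α
end

section
/- Given a relative normalization ȳ₁ with support function q₁ on a hypersurface with K ≠ 0, every member of the one-parameter family ȳ = ȳ₁ + μ·ȳ_AFF (μ ∈ ℝ with μ ≠ −q₁·q_AFF^{-1} pointwise, so that the resulting support function q₁ + μ q_AFF is nowhere zero) is a relative normalization whose Tchebychev vector field equals T̄₁, the Tchebychev field of ȳ₁. -/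
open scoped RealInnerProductSpace

open scoped RealInnerProductSpace

/-! At each point, `∇^{III}(q, ξ̄)` depends only, and linearly, on the differential of `q`, so
the relative normalization `ȳ` and the Tchebychev field `T̄` are linear in the support function.
The equiaffine support function `q_AFF = |K|^{1/(n+2)}` has differential
`q_AFF / ((n+2) K) · dK`, which makes its Tchebychev field vanish. Hence replacing `q₁` by
`q₁ + μ q_AFF` changes `ȳ₁` by `μ ȳ_AFF` and leaves `T̄₁` unchanged; `⟨ξ̄, ȳ⟩ = q` because `ξ̄` is
a unit normal. -/

theorem abs_rpow_div_eq_abs_rpow_sub_one_mul_sign {t : ℝ} (ht : t ≠ 0) (p : ℝ) :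
    |t| ^ p / t = |t| ^ (p - 1) * (SignType.sign t : ℝ) := by
  rw [Real.rpow_sub_one (abs_ne_zero.mpr ht)]
  rcases ht.lt_or_gt with h | h
  · simp only [abs_of_neg h, h, sign_neg, SignType.coe_neg, SignType.coe_one, mul_neg, mul_one]
    field_simp
  · simp only [abs_of_pos h, h, sign_pos, SignType.coe_one, mul_one]

theorem HasFDerivAt.abs_rpow_const {E : Type*} [NormedAddCommGroup E] [NormedSpace ℝ E]
    {f : E → ℝ} {f' : E →L[ℝ] ℝ} {u : E} (hf : HasFDerivAt f f' u) (hu : f u ≠ 0) (p : ℝ) :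
    HasFDerivAt (fun v => |f v| ^ p) ((p * |f u| ^ p / f u) • f') u := by
  convert (hf.abs hu).rpow_const (p := p) (Or.inl (abs_ne_zero.mpr hu)) using 1
  rw [smul_smul, mul_div_assoc, abs_rpow_div_eq_abs_rpow_sub_one_mul_sign hu, mul_assoc]

section

variable {n : ℕ} (hinv : EuclideanSpace ℝ (Fin n) → Matrix (Fin n) (Fin n) ℝ)
  (x ξ : EuclideanSpace ℝ (Fin n) → EuclideanSpace ℝ (Fin (n + 1)))

noncomputable def gradIIIMap (u : EuclideanSpace ℝ (Fin n)) :
    (EuclideanSpace ℝ (Fin n) →L[ℝ] ℝ) →ₗ[ℝ] EuclideanSpace ℝ (Fin (n + 1)) where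
  toFun L := -(∑ i, ∑ j, (hinv u i j * L (EuclideanSpace.single i 1)) • pdv x j u)
  map_add' L M := by
    simp only [add_apply, mul_add, add_smul, Finset.sum_add_distrib, neg_add]
  map_smul' c L := by
    simp only [smul_apply, smul_eq_mul, RingHom.id_apply, Finset.smul_sum,
      smul_smul, smul_neg, mul_left_comm]

theorem gradIII_eq_gradIIIMap_fderiv (f : EuclideanSpace ℝ (Fin n) → ℝ)
    (u : EuclideanSpace ℝ (Fin n)) :
    gradIII hinv x f u = gradIIIMap hinv x u (fderiv ℝ f u) :=
  rfl

theorem HasFDerivAt.gradIII_eq {f : EuclideanSpace ℝ (Fin n) → ℝ}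
    {f' : EuclideanSpace ℝ (Fin n) →L[ℝ] ℝ} {u : EuclideanSpace ℝ (Fin n)}
    (hf : HasFDerivAt f f' u) :
    gradIII hinv x f u = gradIIIMap hinv x u f' := by
  rw [gradIII_eq_gradIIIMap_fderiv, hf.fderiv]

theorem gradIII_add_mul {f g : EuclideanSpace ℝ (Fin n) → ℝ} {u : EuclideanSpace ℝ (Fin n)}
    (hf : DifferentiableAt ℝ f u) (hg : DifferentiableAt ℝ g u) (μ : ℝ) :
    gradIII hinv x (fun v => f v + μ * g v) u = gradIII hinv x f u + μ • gradIII hinv x g u := by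
  have hfg : HasFDerivAt (fun v => f v + μ * g v) (fderiv ℝ f u + μ • fderiv ℝ g u) u :=
    hf.hasFDerivAt.add (hg.hasFDerivAt.const_mul μ)
  rw [hfg.gradIII_eq, map_add, map_smul]
  rfl

theorem relNor_add_mul {u : EuclideanSpace ℝ (Fin n)} {f g : EuclideanSpace ℝ (Fin n) → ℝ}
    (hf : DifferentiableAt ℝ f u) (hg : DifferentiableAt ℝ g u) (μ : ℝ) :
    relNor hinv x ξ (fun v => f v + μ * g v) u
      = relNor hinv x ξ f u + μ • relNor hinv x ξ g u := by
  simp only [relNor, gradIII_add_mul hinv x hf hg μ]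
  module

theorem tcheb_add_mul (K : EuclideanSpace ℝ (Fin n) → ℝ) {u : EuclideanSpace ℝ (Fin n)}
    {f g : EuclideanSpace ℝ (Fin n) → ℝ}
    (hf : DifferentiableAt ℝ f u) (hg : DifferentiableAt ℝ g u) (μ : ℝ) :
    tcheb hinv x K (fun v => f v + μ * g v) u = tcheb hinv x K f u + μ • tcheb hinv x K g u := by
  simp only [tcheb, gradIII_add_mul hinv x hf hg μ]
  module

theorem inner_gradIII_eq_zero {u : EuclideanSpace ℝ (Fin n)}
    (hξ : ∀ i, ⟪ξ u, pdv x i u⟫ = 0)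
    (f : EuclideanSpace ℝ (Fin n) → ℝ) :
    ⟪ξ u, gradIII hinv x f u⟫ = 0 := by
  simp [gradIII, inner_sum, real_inner_smul_right, hξ]

theorem inner_relNor {u : EuclideanSpace ℝ (Fin n)}
    (hξ : ∀ i, ⟪ξ u, pdv x i u⟫ = 0) (hξ₁ : ‖ξ u‖ = 1)
    (q : EuclideanSpace ℝ (Fin n) → ℝ) :
    ⟪ξ u, relNor hinv x ξ q u⟫ = q u := by
  rw [relNor, inner_add_right, inner_gradIII_eq_zero hinv x ξ hξ, real_inner_smul_right,
    real_inner_self_eq_norm_sq, hξ₁]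
  ring

theorem tcheb_abs_rpow_eq_zero {u : EuclideanSpace ℝ (Fin n)}
    {K : EuclideanSpace ℝ (Fin n) → ℝ}
    (hK : DifferentiableAt ℝ K u) (hK₀ : K u ≠ 0) :
    tcheb hinv x K (fun v => |K v| ^ (1 / ((n : ℝ) + 2))) u = 0 := by
  rw [tcheb, (hK.hasFDerivAt.abs_rpow_const hK₀ _).gradIII_eq, map_smul,
    ← gradIII_eq_gradIIIMap_fderiv, smul_smul, sub_eq_zero]
  have hn₂ : ((n : ℝ) + 2) * ((n : ℝ) + 2)⁻¹ = 1 := mul_inv_cancel₀ (by positivity)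
  congr 1
  linear_combination -(|K u| ^ (1 / ((n : ℝ) + 2)) / (2 * n * K u)) * hn₂

end

theorem one_parameter_family_same_tchebychev_general {n : ℕ}
    (U : Set (EuclideanSpace ℝ (Fin n))) (hUo : IsOpen U)
    (x ξ : EuclideanSpace ℝ (Fin n) → EuclideanSpace ℝ (Fin (n + 1)))
    (hinv : EuclideanSpace ℝ (Fin n) → Matrix (Fin n) (Fin n) ℝ)
    (K q₁ : EuclideanSpace ℝ (Fin n) → ℝ)
    (hξo : ∀ u ∈ U, ∀ i, ⟪ξ u, pdv x i u⟫ = 0)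
    (hξn : ∀ u ∈ U, ‖ξ u‖ = 1)
    (hK : ContDiffOn ℝ 1 K U) (hK0 : ∀ u ∈ U, K u ≠ 0)
    (hq₁ : ContDiffOn ℝ 1 q₁ U)
    (μ : ℝ) :
    ∀ u ∈ U,
      relNor hinv x ξ (fun v => q₁ v + μ * |K v| ^ (1 / ((n : ℝ) + 2))) u
          = relNor hinv x ξ q₁ u
            + μ • relNor hinv x ξ (fun v => |K v| ^ (1 / ((n : ℝ) + 2))) u ∧
      ⟪ξ u, relNor hinv x ξ q₁ u
          + μ • relNor hinv x ξ (fun v => |K v| ^ (1 / ((n : ℝ) + 2))) u⟫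
        = q₁ u + μ * |K u| ^ (1 / ((n : ℝ) + 2)) ∧
      tcheb hinv x K (fun v => q₁ v + μ * |K v| ^ (1 / ((n : ℝ) + 2))) u
        = tcheb hinv x K q₁ u := by
  intro u hu
  have hKd : DifferentiableAt ℝ K u :=
    (hK.contDiffAt (hUo.mem_nhds hu)).differentiableAt one_ne_zero
  have hq₁d : DifferentiableAt ℝ q₁ u :=
    (hq₁.contDiffAt (hUo.mem_nhds hu)).differentiableAt one_ne_zero
  have hAd : DifferentiableAt ℝ (fun v => |K v| ^ (1 / ((n : ℝ) + 2))) u :=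
    (hKd.hasFDerivAt.abs_rpow_const (hK0 u hu) _).differentiableAt
  refine ⟨relNor_add_mul hinv x ξ hq₁d hAd μ, ?_, ?_⟩
  · rw [inner_add_right, real_inner_smul_right, inner_relNor hinv x ξ (hξo u hu) (hξn u hu),
      inner_relNor hinv x ξ (hξo u hu) (hξn u hu)]
  · rw [tcheb_add_mul hinv x K hq₁d hAd μ, tcheb_abs_rpow_eq_zero hinv x hKd (hK0 u hu),
      smul_zero, add_zero]

/-- given a relative normalization `ȳ₁` with support function
`q₁` on a hypersurface with `K ≠ 0`, every member `ȳ = ȳ₁ + μ·ȳ_AFF` of the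
one-parameter family (with `μ` such that the support function `q₁ + μ·q_AFF`
is nowhere zero) is a relative normalization (its support function
`⟨ξ̄, ȳ⟩ = q₁ + μ q_AFF` never vanishes, and it is the relative normalization
determined by that support function), and its Tchebychev vector field equals
`T̄₁`, the Tchebychev field of `ȳ₁`. Here `q_AFF = |K|^{1/(n+2)}`. -/
theorem one_parameter_family_same_tchebychev {n : ℕ} (hn : 0 < n)
    (U : Set (EuclideanSpace ℝ (Fin n))) (hUo : IsOpen U)
    (x ξ : EuclideanSpace ℝ (Fin n) → EuclideanSpace ℝ (Fin (n + 1)))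
    (hinv : EuclideanSpace ℝ (Fin n) → Matrix (Fin n) (Fin n) ℝ)
    (K q₁ : EuclideanSpace ℝ (Fin n) → ℝ)
    (hξo : ∀ u ∈ U, ∀ i, ⟪ξ u, pdv x i u⟫ = 0)
    (hξn : ∀ u ∈ U, ‖ξ u‖ = 1)
    (hK : ContDiffOn ℝ 1 K U) (hK0 : ∀ u ∈ U, K u ≠ 0)
    (hq₁ : ContDiffOn ℝ 1 q₁ U) (hq₁0 : ∀ u ∈ U, q₁ u ≠ 0)
    (μ : ℝ)
    (hμ : ∀ u ∈ U, q₁ u + μ * |K u| ^ (1 / ((n : ℝ) + 2)) ≠ 0) :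
    ∀ u ∈ U,
      relNor hinv x ξ (fun v => q₁ v + μ * |K v| ^ (1 / ((n : ℝ) + 2))) u
          = relNor hinv x ξ q₁ u
            + μ • relNor hinv x ξ (fun v => |K v| ^ (1 / ((n : ℝ) + 2))) u ∧
      ⟪ξ u, relNor hinv x ξ q₁ u
          + μ • relNor hinv x ξ (fun v => |K v| ^ (1 / ((n : ℝ) + 2))) u⟫
        = q₁ u + μ * |K u| ^ (1 / ((n : ℝ) + 2)) ∧
      tcheb hinv x K (fun v => q₁ v + μ * |K v| ^ (1 / ((n : ℝ) + 2))) u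
        = tcheb hinv x K q₁ u :=
  one_parameter_family_same_tchebychev_general U hUo x ξ hinv K q₁ hξo hξn hK hK0 hq₁ μ
end

section
/- Let x̄ : U → ℝ^{n+1} be a C³ hypersurface immersion with nowhere-zero Gaussian curvature K, second fundamental form h_{ij}, and unit normal ξ̄. Then the second Beltrami operator of II applied to the position vector satisfies Δ^{II} x̄ = −(1/(2K))·∇^{II}(K, x̄) + n·ξ̄, where ∇^{II}(K, x̄) = h^{ij}K_{/i} x̄_{/j}. -/
/-!
Write `T^k_ij = ᴵΓ^k_ij − ᴵᴵΓ^k_ij`. The Gauss formula `x̄_{/ij} = ᴵΓ^k_ij x̄_{/k} + h_ij ξ̄` gives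
`∇^{II}_j x̄_{/i} = T^k_ij x̄_{/k} + h_ij ξ̄`, hence `Δ^{II} x̄ = h^{ij} T^k_ij x̄_{/k} + n ξ̄`.
By the Codazzi–Mainardi equations `∇^I h` is totally symmetric, and then the Koszul formula for
`ᴵᴵΓ` gives `T^k_ij = −½ h^{km} ∇^I_m h_ij`. Finally, by Jacobi's formula,
`h^{ij} ∇^I_m h_ij = ∂_m log |det h| − 2 ᴵΓ^i_{mi} = ∂_m log |det h| − ∂_m log |det g|`,
which is `K_{/m} / K`.
-/

open scoped RealInnerProductSpace

/-- Christoffel symbols `Γ^k_{ij} = ½ g^{km}(∂_i g_{jm} + ∂_j g_{im} − ∂_m g_{ij})`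
of a metric `g` with inverse `ginv`. -/
noncomputable def christoffel {n : ℕ}
    (g ginv : EuclideanSpace ℝ (Fin n) → Matrix (Fin n) (Fin n) ℝ)
    (u : EuclideanSpace ℝ (Fin n)) (k i j : Fin n) : ℝ :=
  (1 / 2) * ∑ m, ginv u k m *
    (pd (fun v => g v j m) i u + pd (fun v => g v i m) j u
      - pd (fun v => g v i j) m u)

open scoped Matrix

local notation "𝔼" n:max => EuclideanSpace ℝ (Fin n)

section PartialDerivatives

variable {n m : ℕ} {U : Set (𝔼 n)} {u : 𝔼 n}

lemma pd_congr_of_eqOn {f f' : 𝔼 n → ℝ} (hU : IsOpen U) (hu : u ∈ U) (hf : Set.EqOn f f' U)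
    (i : Fin n) : pd f i u = pd f' i u := by
  rw [pd, pd, (Filter.eventuallyEq_of_mem (hU.mem_nhds hu) hf).fderiv_eq]

lemma pdv_congr_of_eqOn {f f' : 𝔼 n → 𝔼 m} (hU : IsOpen U) (hu : u ∈ U) (hf : Set.EqOn f f' U)
    (i : Fin n) : pdv f i u = pdv f' i u := by
  rw [pdv, pdv, (Filter.eventuallyEq_of_mem (hU.mem_nhds hu) hf).fderiv_eq]

lemma pd_inner {f f' : 𝔼 n → 𝔼 m} (hf : DifferentiableAt ℝ f u) (hf' : DifferentiableAt ℝ f' u)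
    (i : Fin n) : pd (fun v => ⟪f v, f' v⟫) i u = ⟪pdv f i u, f' u⟫ + ⟪f u, pdv f' i u⟫ := by
  rw [pd, fderiv_inner_apply (𝕜 := ℝ) hf hf', add_comm, pdv, pdv]

lemma pd_mul {f f' : 𝔼 n → ℝ} (hf : DifferentiableAt ℝ f u) (hf' : DifferentiableAt ℝ f' u)
    (i : Fin n) : pd (fun v => f v * f' v) i u = pd f i u * f' u + f u * pd f' i u := by
  simp only [pd, fderiv_fun_mul hf hf', add_apply, smul_apply, smul_eq_mul]
  ring

lemma inner_pdv_eq_neg_of_eqOn_const {f f' : 𝔼 n → 𝔼 m} {c : ℝ} (hU : IsOpen U) (hu : u ∈ U)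
    (hf : DifferentiableAt ℝ f u) (hf' : DifferentiableAt ℝ f' u)
    (hc : ∀ v ∈ U, ⟪f v, f' v⟫ = c) (i : Fin n) :
    ⟪pdv f i u, f' u⟫ = -⟪f u, pdv f' i u⟫ := by
  have h := pd_inner hf hf' i
  rw [pd_congr_of_eqOn hU hu (f' := fun _ => c) hc, pd, fderiv_const_apply] at h
  rw [zero_apply] at h
  linarith

lemma pd_div_self_eq_sub {f₁ f₂ K : 𝔼 n → ℝ} (hU : IsOpen U) (hu : u ∈ U)
    (hf₁ : DifferentiableAt ℝ f₁ u) (hf₂ : DifferentiableAt ℝ f₂ u) (h₁ : f₁ u ≠ 0)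
    (h₂ : ∀ v ∈ U, f₂ v ≠ 0) (hK : ∀ v ∈ U, K v = f₁ v / f₂ v) (i : Fin n) :
    pd K i u / K u = pd f₁ i u / f₁ u - pd f₂ i u / f₂ u := by
  have hK' : DifferentiableAt ℝ K u :=
    (hf₁.mul (hf₂.inv (h₂ u hu))).congr_of_eventuallyEq
      (Filter.eventuallyEq_of_mem (hU.mem_nhds hu) fun v hv => by rw [hK v hv, div_eq_mul_inv]; rfl)
  have hprod : pd f₁ i u = pd K i u * f₂ u + K u * pd f₂ i u := by
    rw [← pd_mul hK' hf₂]
    exact pd_congr_of_eqOn hU hu (fun v hv => by rw [hK v hv, div_mul_cancel₀ _ (h₂ v hv)]) i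
  rw [hprod, hK u hu]
  field_simp [h₂ u hu]
  ring

lemma ContDiffOn.pdv {f : 𝔼 n → 𝔼 m} {k : ℕ} (hf : ContDiffOn ℝ (k + 1) f U) (hU : IsOpen U)
    (i : Fin n) : ContDiffOn ℝ k (pdv f i) U :=
  (hf.fderiv_of_isOpen hU (by norm_cast)).clm_apply contDiffOn_const

lemma pdv_comm {f : 𝔼 n → 𝔼 m} (hf : ContDiffOn ℝ 2 f U) (hU : IsOpen U) (hu : u ∈ U)
    (i j : Fin n) : pdv (pdv f i) j u = pdv (pdv f j) i u := by
  have hf₂ : ContDiffAt ℝ 2 f u := hf.contDiffAt (hU.mem_nhds hu)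
  have hd : DifferentiableAt ℝ (fderiv ℝ f) u :=
    (hf₂.fderiv_right (m := 1) (by norm_num)).differentiableAt one_ne_zero
  have hpdv (w z : 𝔼 n) : fderiv ℝ (fun v => fderiv ℝ f v w) u z = fderiv ℝ (fderiv ℝ f) u z w := by
    simp [fderiv_clm_apply hd (differentiableAt_const w)]
  change fderiv ℝ (fun v => fderiv ℝ f v _) u _ = fderiv ℝ (fun v => fderiv ℝ f v _) u _
  rw [hpdv, hpdv]
  exact hf₂.isSymmSndFDerivAt (by simp [minSmoothness_of_isRCLikeNormedField]) _ _

end PartialDerivatives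

section MatrixLemmas

variable {ι R : Type*} [Fintype ι] [DecidableEq ι]

lemma Matrix.sum_mul_sum_mul_of_mul_eq_one [CommSemiring R] {B A : Matrix ι ι R} (h : B * A = 1)
    (c : ι → R) (i : ι) : ∑ j, B i j * ∑ l, A j l * c l = c i := by
  have := congrFun (Matrix.mulVec_mulVec c B A) i
  rw [h, Matrix.one_mulVec] at this
  simpa [Matrix.mulVec, dotProduct] using this

lemma Matrix.sum_sum_mul_eq_card_of_mul_eq_one [CommSemiring R] {A B : Matrix ι ι R}
    (hA : A.IsSymm) (hBA : B * A = 1) : ∑ i, ∑ j, B i j * A i j = Fintype.card ι := by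
  have := congrArg Matrix.trace hBA
  simp only [Matrix.trace, Matrix.diag, Matrix.mul_apply, Matrix.one_apply_eq,
    Finset.sum_const, Finset.card_univ, nsmul_eq_mul, mul_one] at this
  rw [← this]
  exact Finset.sum_congr rfl fun i _ => Finset.sum_congr rfl fun j _ => by rw [hA.apply]

lemma Matrix.det_updateCol_eq_sum_perm [CommRing R] (A : Matrix ι ι R) (i : ι) (c : ι → R) :
    (A.updateCol i c).det
      = ∑ σ : Equiv.Perm ι, (σ.sign : R) * (c (σ i) * ∏ j ∈ Finset.univ.erase i, A (σ j) j) := by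
  rw [Matrix.det_apply]
  refine Finset.sum_congr rfl fun σ _ => ?_
  rw [← Finset.mul_prod_erase Finset.univ _ (Finset.mem_univ i), Matrix.updateCol_self,
    Finset.prod_congr rfl fun j hj => Matrix.updateCol_ne (Finset.ne_of_mem_erase hj)]
  simp [Units.smul_def]

lemma Matrix.det_updateCol_eq_det_mul_sum_inv [Field R] (A : Matrix ι ι R) (hA : A.det ≠ 0)
    (i : ι) (c : ι → R) : (A.updateCol i c).det = A.det * ∑ q, A⁻¹ i q * c q := by
  rw [← Matrix.cramer_apply, ← A.det_smul_inv_mulVec_eq_cramer c hA.isUnit]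
  simp [Matrix.mulVec, dotProduct]

end MatrixLemmas

section Determinant

variable {n p : ℕ} {u : 𝔼 n}

lemma hasFDerivAt_det {𝕜 E ι : Type*} [NontriviallyNormedField 𝕜] [NormedAddCommGroup E]
    [NormedSpace 𝕜 E] [Fintype ι] [DecidableEq ι] {M : E → Matrix ι ι 𝕜}
    {M' : ι → ι → E →L[𝕜] 𝕜} {w : E} (hM : ∀ i j, HasFDerivAt (fun v => M v i j) (M' i j) w) :
    HasFDerivAt (fun v => (M v).det)
      (∑ σ : Equiv.Perm ι, (σ.sign : 𝕜) •
        ∑ i, (∏ j ∈ Finset.univ.erase i, M w (σ j) j) • M' (σ i) i) w := by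
  simp only [Matrix.det_apply, Units.smul_def]
  refine HasFDerivAt.fun_sum fun σ _ => ?_
  simp only [← Int.cast_smul_eq_zsmul 𝕜, smul_eq_mul]
  exact (HasFDerivAt.finsetProd fun i _ => hM (σ i) i).const_mul _

lemma differentiableAt_det {M : 𝔼 n → Matrix (Fin p) (Fin p) ℝ}
    (hM : ∀ i j, DifferentiableAt ℝ (fun v => M v i j) u) :
    DifferentiableAt ℝ (fun v => (M v).det) u :=
  (hasFDerivAt_det fun i j => (hM i j).hasFDerivAt).differentiableAt

lemma pd_det {M : 𝔼 n → Matrix (Fin p) (Fin p) ℝ}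
    (hM : ∀ i j, DifferentiableAt ℝ (fun v => M v i j) u) (m : Fin n) :
    pd (fun v => (M v).det) m u
      = ∑ i, ((M u).updateCol i fun q => pd (fun v => M v q i) m u).det := by
  rw [pd, (hasFDerivAt_det fun i j => (hM i j).hasFDerivAt).fderiv]
  simp only [Matrix.det_updateCol_eq_sum_perm, sum_apply, smul_apply, smul_eq_mul, pd]
  rw [Finset.sum_comm]
  simp only [Finset.mul_sum]
  exact Finset.sum_congr rfl fun σ _ => Finset.sum_congr rfl fun i _ => by ring

/-- **Jacobi's formula**. -/
lemma pd_det_eq_det_mul_sum_inv {M : 𝔼 n → Matrix (Fin p) (Fin p) ℝ}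
    (hM : ∀ i j, DifferentiableAt ℝ (fun v => M v i j) u) (hdet : (M u).det ≠ 0) (m : Fin n) :
    pd (fun v => (M v).det) m u
      = (M u).det * ∑ i, ∑ q, (M u)⁻¹ i q * pd (fun v => M v q i) m u := by
  simp only [pd_det hM, Matrix.det_updateCol_eq_det_mul_sum_inv _ hdet, Finset.mul_sum]

lemma pd_det_div_det {U : Set (𝔼 n)} (hU : IsOpen U) (hu : u ∈ U)
    {M : 𝔼 n → Matrix (Fin p) (Fin p) ℝ} (hM : ∀ i j, DifferentiableAt ℝ (fun v => M v i j) u)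
    (hdet : (M u).det ≠ 0) (hsymm : ∀ v ∈ U, (M v).IsSymm) (m : Fin n) :
    pd (fun v => (M v).det) m u / (M u).det
      = ∑ i, ∑ j, (M u)⁻¹ i j * pd (fun v => M v i j) m u := by
  rw [pd_det_eq_det_mul_sum_inv hM hdet, mul_div_cancel_left₀ _ hdet]
  simp_rw [pd_congr_of_eqOn hU hu (fun v hv => (hsymm v hv).apply _ _)]

end Determinant

section Frame

variable {E : Type*} [NormedAddCommGroup E] [InnerProductSpace ℝ E] {p : ℕ}

lemma notMem_span_of_inner_eq_zero {ι : Type*} {e : ι → E} {ν : E} (hν : ν ≠ 0)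
    (hνe : ∀ i, ⟪ν, e i⟫ = 0) : ν ∉ Submodule.span ℝ (Set.range e) := by
  intro hmem
  have hle : Submodule.span ℝ (Set.range e) ≤ (ℝ ∙ ν)ᗮ := Submodule.span_le.mpr <|
    Set.range_subset_iff.mpr fun i => Submodule.mem_orthogonal_singleton_iff_inner_right.mpr (hνe i)
  exact hν <| inner_self_eq_zero.mp <|
    Submodule.mem_orthogonal_singleton_iff_inner_right.mp (hle hmem)

lemma eq_sum_inv_gram_smul_add_inner_smul [FiniteDimensional ℝ E] (hE : Module.finrank ℝ E = p + 1)
    {e : Fin p → E} {ν : E} (he : (Matrix.gram ℝ e).det ≠ 0) (hνe : ∀ i, ⟪ν, e i⟫ = 0)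
    (hν : ‖ν‖ = 1) (w : E) :
    w = ∑ k, (∑ m, (Matrix.gram ℝ e)⁻¹ k m * ⟪w, e m⟫) • e k + ⟪ν, w⟫ • ν := by
  have hν0 : ν ≠ 0 := by rintro rfl; simp at hν
  have hli : LinearIndependent ℝ (Fin.snoc e ν : Fin (p + 1) → E) :=
    linearIndependent_finSnoc.mpr
      ⟨Matrix.linearIndependent_of_det_gram_ne_zero he, notMem_span_of_inner_eq_zero hν0 hνe⟩
  let b := basisOfLinearIndependentOfCardEqFinrank hli (by simp [hE])
  have hb : ⇑b = Fin.snoc e ν := coe_basisOfLinearIndependentOfCardEqFinrank hli _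
  refine InnerProductSpace.ext_inner_left_basis b fun i => ?_
  rw [hb]
  induction i using Fin.lastCases with
  | last =>
    simp [inner_add_right, inner_sum, inner_smul_right, hνe, hν]
  | cast l =>
    have hcontract := Matrix.sum_mul_sum_mul_of_mul_eq_one
      (Matrix.mul_nonsing_inv (Matrix.gram ℝ e) he.isUnit) (fun m => ⟪w, e m⟫) l
    simp only [Matrix.gram_apply] at hcontract
    simp only [Fin.snoc_castSucc, inner_add_right, inner_sum, inner_smul_right,
      real_inner_comm ν (e l), hνe, mul_zero, add_zero]
    rw [real_inner_comm]
    simp_rw [mul_comm _ ⟪e l, _⟫]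
    exact hcontract.symm

end Frame

section CovariantDerivative

variable {ι : Type*} [Fintype ι] (Γ : ι → ι → ι → ℝ) (A : Matrix ι ι ℝ)
  (dA : ι → ι → ι → ℝ)

/-- `∇_m A_ij`, where `dA m i j = ∂_m A_ij` and `Γ k i j = Γ^k_ij`. -/
def covDeriv (m i j : ι) : ℝ :=
  dA m i j - ∑ l, Γ l m i * A l j - ∑ l, Γ l m j * A i l

variable {Γ A dA}

lemma covDeriv_comm_of_eq_sub_sum (hΓ : ∀ l i j, Γ l i j = Γ l j i) (hA : A.IsSymm)
    {S : ι → ι → ι → ℝ} (hS₁ : ∀ a b c, S a b c = S b a c)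
    (hS₂ : ∀ a b c, S a b c = S a c b) (hdA : ∀ m i j, dA m i j = S i j m - ∑ l, Γ l i j * A l m)
    (m i j : ι) :
    covDeriv Γ A dA m i j = covDeriv Γ A dA i m j
      ∧ covDeriv Γ A dA m i j = covDeriv Γ A dA m j i := by
  have hexp : ∀ m i j, covDeriv Γ A dA m i j
      = S i j m - ∑ l, (Γ l i j * A l m + Γ l m i * A l j + Γ l m j * A l i) := by
    intro m i j
    have hsymm : ∑ l, Γ l m j * A i l = ∑ l, Γ l m j * A l i :=
      Finset.sum_congr rfl fun l _ => by rw [hA.apply l i]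
    rw [covDeriv, hdA, hsymm, Finset.sum_add_distrib, Finset.sum_add_distrib]
    ring
  constructor
  · rw [hexp, hexp, hS₁ i, hS₂, hS₁ j]
    congr 1
    exact Finset.sum_congr rfl fun l _ => by rw [hΓ l i m]; ring
  · rw [hexp, hexp, hS₁ i]
    congr 1
    exact Finset.sum_congr rfl fun l _ => by rw [hΓ l j i]; ring

/-- The left side is the Koszul formula for the Christoffel symbols of `A`. -/
lemma christoffel_sum_eq_add_covDeriv [DecidableEq ι] (hΓ : ∀ l i j, Γ l i j = Γ l j i)
    (hA : A.IsSymm) {B : Matrix ι ι ℝ} (hBA : B * A = 1)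
    (hC₁ : ∀ m i j, covDeriv Γ A dA m i j = covDeriv Γ A dA i m j)
    (hC₂ : ∀ m i j, covDeriv Γ A dA m i j = covDeriv Γ A dA m j i) (k i j : ι) :
    1 / 2 * ∑ m, B k m * (dA i j m + dA j i m - dA m i j)
      = Γ k i j + 1 / 2 * ∑ m, B k m * covDeriv Γ A dA m i j := by
  have hdA : ∀ a b c, dA a b c = covDeriv Γ A dA a b c + ∑ l, Γ l a b * A l c
      + ∑ l, Γ l a c * A b l := fun a b c => by rw [covDeriv]; ring
  have hkoszul : ∀ m, dA i j m + dA j i m - dA m i j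
      = covDeriv Γ A dA m i j + 2 * ∑ l, A m l * Γ l i j := by
    intro m
    have h₁ : ∑ l, Γ l i m * A j l = ∑ l, Γ l m i * A l j :=
      Finset.sum_congr rfl fun l _ => by rw [hΓ l i m, hA.apply l j]
    have h₂ : ∑ l, Γ l j m * A i l = ∑ l, Γ l m j * A i l :=
      Finset.sum_congr rfl fun l _ => by rw [hΓ l j m]
    have h₃ : ∑ l, Γ l j i * A l m = ∑ l, A m l * Γ l i j :=
      Finset.sum_congr rfl fun l _ => by rw [hΓ l j i, hA.apply m l, mul_comm]
    have h₄ : ∑ l, Γ l i j * A l m = ∑ l, A m l * Γ l i j :=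
      Finset.sum_congr rfl fun l _ => by rw [hA.apply m l, mul_comm]
    rw [hdA i j m, hdA j i m, hdA m i j, h₁, h₂, h₃, h₄, hC₂ i, ← hC₁, hC₁ j, hC₂ i, ← hC₁]
    ring
  simp only [hkoszul, mul_add, Finset.sum_add_distrib, Matrix.sum_mul_sum_mul_of_mul_eq_one hBA,
    mul_left_comm _ (2 : ℝ), ← Finset.mul_sum]
  ring

lemma sum_inv_mul_covDeriv [DecidableEq ι] (hA : A.IsSymm) {B : Matrix ι ι ℝ} (hAB : A * B = 1)
    (m : ι) :
    ∑ i, ∑ j, B i j * covDeriv Γ A dA m i j = ∑ i, ∑ j, B i j * dA m i j - 2 * ∑ i, Γ i m i := by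
  have hBA : B * A = 1 := mul_eq_one_comm.mp hAB
  have hBtA : Bᵀ * A = 1 := by rw [← hA.eq, ← Matrix.transpose_mul, hAB, Matrix.transpose_one]
  have h₁ : ∀ i, ∑ j, B i j * ∑ l, Γ l m i * A l j = Γ i m i := fun i => by
    simp_rw [← Matrix.sum_mul_sum_mul_of_mul_eq_one hBA (fun l => Γ l m i) i, hA.apply _ _,
      mul_comm]
  have h₂ : ∀ j, ∑ i, B i j * ∑ l, Γ l m j * A i l = Γ j m j := fun j => by
    simp_rw [← Matrix.sum_mul_sum_mul_of_mul_eq_one hBtA (fun l => Γ l m j) j,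
      Matrix.transpose_apply, mul_comm (Γ _ m j)]
  simp only [covDeriv, mul_sub, Finset.sum_sub_distrib, h₁]
  rw [Finset.sum_comm (f := fun i j => B i j * ∑ l, Γ l m j * A i l)]
  simp only [h₂]
  ring

end CovariantDerivative

structure IsHypersurfacePatch {n : ℕ} (U : Set (𝔼 n)) (x ξ : 𝔼 n → 𝔼 (n + 1))
    (g h : 𝔼 n → Matrix (Fin n) (Fin n) ℝ) : Prop where
  isOpen : IsOpen U
  contDiffOn_position : ContDiffOn ℝ 3 x U
  contDiffOn_normal : ContDiffOn ℝ 1 ξ U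
  metric_eq : ∀ u ∈ U, ∀ i j, g u i j = ⟪pdv x i u, pdv x j u⟫
  secondFF_eq : ∀ u ∈ U, ∀ i j, h u i j = ⟪ξ u, pdv (pdv x i) j u⟫
  inner_normal_tangent : ∀ u ∈ U, ∀ i, ⟪ξ u, pdv x i u⟫ = 0
  norm_normal : ∀ u ∈ U, ‖ξ u‖ = 1
  det_metric_ne_zero : ∀ u ∈ U, (g u).det ≠ 0

/-- `ᴵΓ^k_ij`, defined as the tangential coefficients of `x̄_{/ij}` (Gauss formula) rather than
from derivatives of `g`. -/
noncomputable def christoffelI {n : ℕ} (x : 𝔼 n → 𝔼 (n + 1)) (g : 𝔼 n → Matrix (Fin n) (Fin n) ℝ)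
    (u : 𝔼 n) (k i j : Fin n) : ℝ :=
  ∑ m, (g u)⁻¹ k m * ⟪pdv (pdv x i) j u, pdv x m u⟫

/-- `∇^I_m h_ij`. -/
noncomputable def covDerivSecondFF {n : ℕ} (x : 𝔼 n → 𝔼 (n + 1))
    (g h : 𝔼 n → Matrix (Fin n) (Fin n) ℝ) (u : 𝔼 n) : Fin n → Fin n → Fin n → ℝ :=
  covDeriv (christoffelI x g u) (h u) fun m i j => pd (fun v => h v i j) m u

namespace IsHypersurfacePatch

variable {n : ℕ} {U : Set (𝔼 n)} {u : 𝔼 n} {x ξ : 𝔼 n → 𝔼 (n + 1)}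
  {g h hinv : 𝔼 n → Matrix (Fin n) (Fin n) ℝ}

lemma contDiffOn_pdv (H : IsHypersurfacePatch U x ξ g h) (i : Fin n) :
    ContDiffOn ℝ 2 (pdv x i) U :=
  H.contDiffOn_position.pdv (k := 2) H.isOpen i

lemma differentiableAt_pdv (H : IsHypersurfacePatch U x ξ g h) (hu : u ∈ U) (i : Fin n) :
    DifferentiableAt ℝ (pdv x i) u :=
  ((H.contDiffOn_pdv i).contDiffAt (H.isOpen.mem_nhds hu)).differentiableAt (by norm_num)

lemma differentiableAt_pdv_pdv (H : IsHypersurfacePatch U x ξ g h) (hu : u ∈ U) (i j : Fin n) :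
    DifferentiableAt ℝ (pdv (pdv x i) j) u :=
  (((H.contDiffOn_pdv i).pdv (k := 1) H.isOpen j).contDiffAt
    (H.isOpen.mem_nhds hu)).differentiableAt (by norm_num)

lemma differentiableAt_normal (H : IsHypersurfacePatch U x ξ g h) (hu : u ∈ U) :
    DifferentiableAt ℝ ξ u :=
  (H.contDiffOn_normal.contDiffAt (H.isOpen.mem_nhds hu)).differentiableAt (by norm_num)

lemma pdv_pdv_comm (H : IsHypersurfacePatch U x ξ g h) (hu : u ∈ U) (i j : Fin n) :
    pdv (pdv x i) j u = pdv (pdv x j) i u :=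
  pdv_comm (H.contDiffOn_position.of_le (by norm_num)) H.isOpen hu i j

lemma metric_isSymm (H : IsHypersurfacePatch U x ξ g h) (hu : u ∈ U) : (g u).IsSymm :=
  Matrix.IsSymm.ext fun i j => by rw [H.metric_eq u hu, H.metric_eq u hu, real_inner_comm]

lemma secondFF_isSymm (H : IsHypersurfacePatch U x ξ g h) (hu : u ∈ U) : (h u).IsSymm :=
  Matrix.IsSymm.ext fun i j => by rw [H.secondFF_eq u hu, H.secondFF_eq u hu, H.pdv_pdv_comm hu]

lemma differentiableAt_metric (H : IsHypersurfacePatch U x ξ g h) (hu : u ∈ U) (i j : Fin n) :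
    DifferentiableAt ℝ (fun v => g v i j) u :=
  ((H.differentiableAt_pdv hu i).inner ℝ (H.differentiableAt_pdv hu j)).congr_of_eventuallyEq
    (Filter.eventuallyEq_of_mem (H.isOpen.mem_nhds hu) fun v hv => H.metric_eq v hv i j)

lemma differentiableAt_secondFF (H : IsHypersurfacePatch U x ξ g h) (hu : u ∈ U) (i j : Fin n) :
    DifferentiableAt ℝ (fun v => h v i j) u :=
  ((H.differentiableAt_normal hu).inner ℝ
    (H.differentiableAt_pdv_pdv hu i j)).congr_of_eventuallyEq
    (Filter.eventuallyEq_of_mem (H.isOpen.mem_nhds hu) fun v hv => H.secondFF_eq v hv i j)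

lemma christoffelI_comm (H : IsHypersurfacePatch U x ξ g h) (hu : u ∈ U) (k i j : Fin n) :
    christoffelI x g u k i j = christoffelI x g u k j i := by
  simp only [christoffelI, H.pdv_pdv_comm hu i j]

lemma pdv_pdv_eq_sum_christoffelI_smul_add (H : IsHypersurfacePatch U x ξ g h) (hu : u ∈ U)
    (i j : Fin n) :
    pdv (pdv x i) j u = ∑ k, christoffelI x g u k i j • pdv x k u + h u i j • ξ u := by
  have hgram : g u = Matrix.gram ℝ fun i => pdv x i u := Matrix.ext (H.metric_eq u hu)
  have hdet := H.det_metric_ne_zero u hu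
  simp only [H.secondFF_eq u hu, christoffelI]
  rw [hgram] at hdet ⊢
  exact eq_sum_inv_gram_smul_add_inner_smul (by simp) hdet (H.inner_normal_tangent u hu)
    (H.norm_normal u hu) _

lemma inner_pdv_normal_tangent (H : IsHypersurfacePatch U x ξ g h) (hu : u ∈ U) (m k : Fin n) :
    ⟪pdv ξ m u, pdv x k u⟫ = -h u k m := by
  rw [inner_pdv_eq_neg_of_eqOn_const H.isOpen hu (H.differentiableAt_normal hu)
    (H.differentiableAt_pdv hu k) (fun v hv => H.inner_normal_tangent v hv k), H.secondFF_eq u hu]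

lemma inner_pdv_normal_self (H : IsHypersurfacePatch U x ξ g h) (hu : u ∈ U) (m : Fin n) :
    ⟪pdv ξ m u, ξ u⟫ = 0 := by
  have hconst : ∀ v ∈ U, ⟪ξ v, ξ v⟫ = 1 := fun v hv => by
    rw [real_inner_self_eq_norm_sq, H.norm_normal v hv, one_pow]
  have := inner_pdv_eq_neg_of_eqOn_const H.isOpen hu (H.differentiableAt_normal hu)
    (H.differentiableAt_normal hu) hconst m
  rw [real_inner_comm (pdv ξ m u)] at this
  linarith

lemma pd_secondFF_eq (H : IsHypersurfacePatch U x ξ g h) (hu : u ∈ U) (m i j : Fin n) :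
    pd (fun v => h v i j) m u
      = ⟪ξ u, pdv (pdv (pdv x i) j) m u⟫ - ∑ l, christoffelI x g u l i j * h u l m := by
  rw [pd_congr_of_eqOn H.isOpen hu (fun v hv => H.secondFF_eq v hv i j),
    pd_inner (H.differentiableAt_normal hu) (H.differentiableAt_pdv_pdv hu i j),
    H.pdv_pdv_eq_sum_christoffelI_smul_add hu]
  simp only [inner_add_right, inner_sum, inner_smul_right, H.inner_pdv_normal_tangent hu,
    H.inner_pdv_normal_self hu, mul_zero, add_zero, mul_neg, Finset.sum_neg_distrib]
  ring

/-- The Codazzi–Mainardi equations. -/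
lemma covDerivSecondFF_comm (H : IsHypersurfacePatch U x ξ g h) (hu : u ∈ U) (m i j : Fin n) :
    covDerivSecondFF x g h u m i j = covDerivSecondFF x g h u i m j
      ∧ covDerivSecondFF x g h u m i j = covDerivSecondFF x g h u m j i :=
  covDeriv_comm_of_eq_sub_sum (H.christoffelI_comm hu) (H.secondFF_isSymm hu)
    (fun a b c => by rw [pdv_congr_of_eqOn H.isOpen hu (fun v hv => H.pdv_pdv_comm hv a b)])
    (fun a b c => by rw [pdv_comm (H.contDiffOn_pdv a) H.isOpen hu b c])
    (H.pd_secondFF_eq hu) m i j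

lemma sum_inv_mul_pd_metric (H : IsHypersurfacePatch U x ξ g h) (hu : u ∈ U) (m : Fin n) :
    ∑ i, ∑ j, (g u)⁻¹ i j * pd (fun v => g v i j) m u = 2 * ∑ i, christoffelI x g u i m i := by
  have hpdg : ∀ i j, pd (fun v => g v i j) m u
      = ⟪pdv (pdv x i) m u, pdv x j u⟫ + ⟪pdv (pdv x j) m u, pdv x i u⟫ := fun i j => by
    rw [pd_congr_of_eqOn H.isOpen hu (fun v hv => H.metric_eq v hv i j),
      pd_inner (H.differentiableAt_pdv hu i) (H.differentiableAt_pdv hu j),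
      real_inner_comm (pdv x i u)]
  have hswap : ∑ i, ∑ j, (g u)⁻¹ i j * ⟪pdv (pdv x j) m u, pdv x i u⟫
      = ∑ i, ∑ j, (g u)⁻¹ i j * ⟪pdv (pdv x i) m u, pdv x j u⟫ := by
    rw [Finset.sum_comm]
    simp_rw [(H.metric_isSymm hu).inv.apply]
  simp only [hpdg, mul_add, Finset.sum_add_distrib, hswap, H.christoffelI_comm hu _ m]
  rw [two_mul]
  rfl

lemma christoffel_eq_christoffelI_add (H : IsHypersurfacePatch U x ξ g h) (hu : u ∈ U)
    (hinv_mul : hinv u * h u = 1) (k i j : Fin n) :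
    christoffel h hinv u k i j
      = christoffelI x g u k i j + 1 / 2 * ∑ m, hinv u k m * covDerivSecondFF x g h u m i j :=
  christoffel_sum_eq_add_covDeriv (H.christoffelI_comm hu) (H.secondFF_isSymm hu) hinv_mul
    (fun m i j => (H.covDerivSecondFF_comm hu m i j).1)
    (fun m i j => (H.covDerivSecondFF_comm hu m i j).2) k i j

lemma pdv_pdv_sub_sum_christoffel_smul (H : IsHypersurfacePatch U x ξ g h) (hu : u ∈ U)
    (hinv_mul : hinv u * h u = 1) (i j : Fin n) :
    pdv (pdv x i) j u - ∑ k, christoffel h hinv u k i j • pdv x k u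
      = h u i j • ξ u
        - ∑ k, (1 / 2 * ∑ m, hinv u k m * covDerivSecondFF x g h u m i j) • pdv x k u := by
  simp only [H.pdv_pdv_eq_sum_christoffelI_smul_add hu,
    H.christoffel_eq_christoffelI_add hu hinv_mul, add_smul, Finset.sum_add_distrib]
  abel

lemma sum_inv_mul_covDerivSecondFF (H : IsHypersurfacePatch U x ξ g h) (hu : u ∈ U)
    (mul_hinv : h u * hinv u = 1) {K : 𝔼 n → ℝ} (hK : ∀ v ∈ U, K v = (h v).det / (g v).det)
    (m : Fin n) :
    ∑ i, ∑ j, hinv u i j * covDerivSecondFF x g h u m i j = pd K m u / K u := by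
  have hdet : (h u).det ≠ 0 := by
    have := congrArg Matrix.det mul_hinv
    rw [Matrix.det_mul, Matrix.det_one] at this
    exact left_ne_zero_of_mul_eq_one this
  rw [covDerivSecondFF, sum_inv_mul_covDeriv (H.secondFF_isSymm hu) mul_hinv,
    pd_div_self_eq_sub H.isOpen hu (differentiableAt_det (H.differentiableAt_secondFF hu))
      (differentiableAt_det (H.differentiableAt_metric hu)) hdet H.det_metric_ne_zero hK,
    pd_det_div_det H.isOpen hu (H.differentiableAt_secondFF hu) hdet
      (fun v hv => H.secondFF_isSymm hv),
    pd_det_div_det H.isOpen hu (H.differentiableAt_metric hu) (H.det_metric_ne_zero u hu)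
      (fun v hv => H.metric_isSymm hv),
    Matrix.inv_eq_right_inv mul_hinv, H.sum_inv_mul_pd_metric hu]

lemma sum_inv_mul_half_sum_inv_mul_covDerivSecondFF (H : IsHypersurfacePatch U x ξ g h)
    (hu : u ∈ U) (mul_hinv : h u * hinv u = 1) {K : 𝔼 n → ℝ}
    (hK : ∀ v ∈ U, K v = (h v).det / (g v).det) (k : Fin n) :
    ∑ i, ∑ j, hinv u i j * (1 / 2 * ∑ m, hinv u k m * covDerivSecondFF x g h u m i j)
      = 1 / (2 * K u) * ∑ m, hinv u m k * pd K m u := by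
  have hsymm : (hinv u).IsSymm := Matrix.inv_eq_right_inv mul_hinv ▸ (H.secondFF_isSymm hu).inv
  calc _ = ∑ m, 1 / 2 * hinv u k m * ∑ i, ∑ j, hinv u i j * covDerivSecondFF x g h u m i j := by
        simp only [Finset.mul_sum]
        rw [Finset.sum_comm_cycle]
        exact Finset.sum_congr rfl fun m _ => Finset.sum_congr rfl fun i _ =>
          Finset.sum_congr rfl fun j _ => by ring
    _ = _ := by
        simp only [H.sum_inv_mul_covDerivSecondFF hu mul_hinv hK, Finset.mul_sum, hsymm.apply k]
        exact Finset.sum_congr rfl fun m _ => by ring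

end IsHypersurfacePatch

theorem beltrami_II_position_general {n : ℕ}
    (U : Set (EuclideanSpace ℝ (Fin n))) (hUo : IsOpen U)
    (x ξ : EuclideanSpace ℝ (Fin n) → EuclideanSpace ℝ (Fin (n + 1)))
    (hx : ContDiffOn ℝ 3 x U) (hξ : ContDiffOn ℝ 2 ξ U)
    (g h hinv : EuclideanSpace ℝ (Fin n) → Matrix (Fin n) (Fin n) ℝ)
    (K : EuclideanSpace ℝ (Fin n) → ℝ)
    (hg : ∀ u ∈ U, ∀ i j, g u i j = ⟪pdv x i u, pdv x j u⟫)
    (hh : ∀ u ∈ U, ∀ i j, h u i j = ⟪ξ u, pdv (pdv x i) j u⟫)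
    (hξo : ∀ u ∈ U, ∀ i, ⟪ξ u, pdv x i u⟫ = 0)
    (hξn : ∀ u ∈ U, ‖ξ u‖ = 1)
    (hgdet : ∀ u ∈ U, (g u).det ≠ 0)
    (hhinv : ∀ u ∈ U, h u * hinv u = 1)
    (hK : ∀ u ∈ U, K u = (h u).det / (g u).det) :
    ∀ u ∈ U,
      (∑ i, ∑ j, hinv u i j •
          (pdv (pdv x i) j u - ∑ k, christoffel h hinv u k i j • pdv x k u))
        = (-(1 / (2 * K u))) •
            (∑ i, ∑ j, (hinv u i j * pd K i u) • pdv x j u)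
          + (n : ℝ) • ξ u := by
  have H : IsHypersurfacePatch U x ξ g h :=
    ⟨hUo, hx, hξ.of_le (by norm_num), hg, hh, hξo, hξn, hgdet⟩
  intro u hu
  have hinv_mul : hinv u * h u = 1 := mul_eq_one_comm.mp (hhinv u hu)
  calc _ = ∑ i, ∑ j, hinv u i j • (h u i j • ξ u
          - ∑ k, (1 / 2 * ∑ m, hinv u k m * covDerivSecondFF x g h u m i j) • pdv x k u) := by
        simp only [H.pdv_pdv_sub_sum_christoffel_smul hu hinv_mul]
    _ = (∑ i, ∑ j, hinv u i j * h u i j) • ξ u - ∑ k, (∑ i, ∑ j, hinv u i j *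
          (1 / 2 * ∑ m, hinv u k m * covDerivSecondFF x g h u m i j)) • pdv x k u := by
        simp only [smul_sub, Finset.sum_sub_distrib, Finset.smul_sum, smul_smul, Finset.sum_smul]
        rw [Finset.sum_comm_cycle (f := fun i j k => _)]
    _ = _ := by
        simp only [Matrix.sum_sum_mul_eq_card_of_mul_eq_one (H.secondFF_isSymm hu) hinv_mul,
          Fintype.card_fin, H.sum_inv_mul_half_sum_inv_mul_covDerivSecondFF hu (hhinv u hu) hK]
        simp only [Finset.smul_sum, smul_smul, Finset.mul_sum, Finset.sum_smul]
        rw [Finset.sum_comm (f := fun i j => _), sub_eq_neg_add]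
        simp only [neg_mul, neg_smul, Finset.sum_neg_distrib]

/-- for a C³ hypersurface immersion `x̄ : U → ℝ^{n+1}` with
nowhere-zero Gaussian curvature `K = det h / det g`, second fundamental form
`h_{ij} = ⟨ξ̄, x̄_{/ij}⟩` and unit normal `ξ̄`, the second Beltrami operator of
`II` applied to the position vector satisfies
`Δ^{II}x̄ = −(1/(2K))·∇^{II}(K, x̄) + n·ξ̄`, with
`∇^{II}(K, x̄) = h^{ij} K_{/i} x̄_{/j}` and
`Δ^{II}x̄ = h^{ij}(x̄_{/ij} − {}^{II}Γ^k_{ij} x̄_{/k})`. -/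
theorem beltrami_II_position {n : ℕ} (hn : 0 < n)
    (U : Set (EuclideanSpace ℝ (Fin n))) (hUo : IsOpen U)
    (x ξ : EuclideanSpace ℝ (Fin n) → EuclideanSpace ℝ (Fin (n + 1)))
    (hx : ContDiffOn ℝ 3 x U) (hξ : ContDiffOn ℝ 2 ξ U)
    (g h hinv : EuclideanSpace ℝ (Fin n) → Matrix (Fin n) (Fin n) ℝ)
    (K : EuclideanSpace ℝ (Fin n) → ℝ)
    (hg : ∀ u ∈ U, ∀ i j, g u i j = ⟪pdv x i u, pdv x j u⟫)
    (hh : ∀ u ∈ U, ∀ i j, h u i j = ⟪ξ u, pdv (pdv x i) j u⟫)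
    (hξo : ∀ u ∈ U, ∀ i, ⟪ξ u, pdv x i u⟫ = 0)
    (hξn : ∀ u ∈ U, ‖ξ u‖ = 1)
    (hgdet : ∀ u ∈ U, (g u).det ≠ 0)
    (hhinv : ∀ u ∈ U, h u * hinv u = 1)
    (hK : ∀ u ∈ U, K u = (h u).det / (g u).det)
    (hK0 : ∀ u ∈ U, K u ≠ 0) :
    ∀ u ∈ U,
      (∑ i, ∑ j, hinv u i j •
          (pdv (pdv x i) j u - ∑ k, christoffel h hinv u k i j • pdv x k u))
        = (-(1 / (2 * K u))) •
            (∑ i, ∑ j, (hinv u i j * pd K i u) • pdv x j u)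
          + (n : ℝ) • ξ u :=
  beltrami_II_position_general U hUo x ξ hx hξ g h hinv K hg hh hξo hξn hgdet hhinv hK
end

section
/- The Tchebychev vector field of any relative normalization is a gradient with respect to the relative metric: T̄ = ∇^G(ln φ, x̄) with φ = |K|^{−1/(2n)}·|q|^{(n+2)/(2n)}; equivalently, the 1-form G(T̄, ·) obtained by lowering the index of T̄ with the relative metric G equals d(ln φ), and is therefore closed (T̄ is irrotational with respect to G). -/
open scoped RealInnerProductSpace

/-!
By (16a) each III-gradient in (19b) is `−q⁻¹` times a `G`-gradient, so `T̄` is the `G`-gradient of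
`−(1/(2n)) ln|K| + ((n+2)/(2n)) ln|q|`, which agrees with `ln φ` near every point of `U`. Since the
`x̄_{/j}` are independent, this determines the components `T^j = q h^{ij} (ln φ)_{/i}`, and lowering
the index with the symmetric `h = (h^{ij})⁻¹` gives back `d(ln φ)`. Closedness is the symmetry of the
second derivatives of the `C²` function `ln φ`.
-/

open Filter Topology Matrix

/-- `∇^G(f, x̄) = G^{ij} f_{/i} x̄_{/j}`, with `G^{ij} = q h^{ij}` the inverse of
`G_{ij} = q⁻¹ h_{ij}`. -/
noncomputable def gradG {n : ℕ}
    (hinv : EuclideanSpace ℝ (Fin n) → Matrix (Fin n) (Fin n) ℝ)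
    (x : EuclideanSpace ℝ (Fin n) → EuclideanSpace ℝ (Fin (n + 1)))
    (q f : EuclideanSpace ℝ (Fin n) → ℝ) (u : EuclideanSpace ℝ (Fin n)) :
    EuclideanSpace ℝ (Fin (n + 1)) :=
  ∑ i, ∑ j, (q u * hinv u i j * pd f i u) • pdv x j u

theorem Matrix.IsSymm.mulVec_vecMul_of_mul_eq_one {ι R : Type*} [Fintype ι] [DecidableEq ι]
    [CommRing R] {A B : Matrix ι ι R} (hA : A.IsSymm) (hAB : A * B = 1) (w : ι → R) :
    A *ᵥ (w ᵥ* B) = w := by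
  have hB : B.IsSymm := inv_eq_right_inv hAB ▸ hA.inv
  rw [← hB.eq, vecMul_transpose, mulVec_mulVec, hAB, one_mulVec]

theorem Real.log_abs_rpow_mul_abs_rpow {a b : ℝ} (ha : a ≠ 0) (hb : b ≠ 0) (r s : ℝ) :
    Real.log (|a| ^ r * |b| ^ s) = r * Real.log a + s * Real.log b := by
  have ha' : 0 < |a| := abs_pos.2 ha
  have hb' : 0 < |b| := abs_pos.2 hb
  rw [Real.log_mul (Real.rpow_pos_of_pos ha' r).ne' (Real.rpow_pos_of_pos hb' s).ne',
    Real.log_rpow ha', Real.log_rpow hb', Real.log_abs, Real.log_abs]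

section PartialDerivatives

variable {n : ℕ} {f g : EuclideanSpace ℝ (Fin n) → ℝ} {u : EuclideanSpace ℝ (Fin n)}

theorem pd_congr_of_eventuallyEq (hfg : f =ᶠ[𝓝 u] g) (i : Fin n) : pd f i u = pd g i u := by
  rw [pd, pd, hfg.fderiv_eq]

theorem pd_const_mul_log_add_const_mul_log (a b : ℝ) (hf : DifferentiableAt ℝ f u)
    (hf0 : f u ≠ 0) (hg : DifferentiableAt ℝ g u) (hg0 : g u ≠ 0) (i : Fin n) :
    pd (fun v => a * Real.log (f v) + b * Real.log (g v)) i u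
      = a * (f u)⁻¹ * pd f i u + b * (g u)⁻¹ * pd g i u := by
  have hderiv : HasFDerivAt (fun v => a * Real.log (f v) + b * Real.log (g v))
      (a • (f u)⁻¹ • fderiv ℝ f u + b • (g u)⁻¹ • fderiv ℝ g u) u :=
    ((hf.hasFDerivAt.log hf0).const_mul a).add ((hg.hasFDerivAt.log hg0).const_mul b)
  rw [pd, hderiv.fderiv, pd, pd]
  simp [mul_assoc]

theorem pd_pd_comm (hf : ContDiffAt ℝ 2 f u) (i j : Fin n) :
    pd (pd f i) j u = pd (pd f j) i u := by
  have hdiff : DifferentiableAt ℝ (fderiv ℝ f) u :=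
    (hf.fderiv_right (m := 1) (by norm_num)).differentiableAt (by norm_num)
  have hsecond (a b : Fin n) : pd (pd f a) b u
      = fderiv ℝ (fderiv ℝ f) u (EuclideanSpace.single b 1) (EuclideanSpace.single a 1) := by
    change fderiv ℝ (fun v => fderiv ℝ f v (EuclideanSpace.single a 1)) u _ = _
    simp [fderiv_clm_apply hdiff (differentiableAt_const _)]
  rw [hsecond, hsecond, hf.isSymmSndFDerivAt (by simp)]

theorem pd_comm_of_eqOn_pd {U : Set (EuclideanSpace ℝ (Fin n))} (hU : IsOpen U) (hu : u ∈ U)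
    (hf : ContDiffAt ℝ 2 f u) {ω : Fin n → EuclideanSpace ℝ (Fin n) → ℝ}
    (hω : ∀ v ∈ U, ∀ i, ω i v = pd f i v) (i j : Fin n) :
    pd (ω i) j u = pd (ω j) i u := by
  have hloc (k : Fin n) : ω k =ᶠ[𝓝 u] pd f k :=
    eventually_of_mem (hU.mem_nhds hu) fun v hv => hω v hv k
  rw [pd_congr_of_eventuallyEq (hloc i), pd_congr_of_eventuallyEq (hloc j), pd_pd_comm hf]

end PartialDerivatives

section Gradients

variable {n : ℕ} (hinv : EuclideanSpace ℝ (Fin n) → Matrix (Fin n) (Fin n) ℝ)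
  (x : EuclideanSpace ℝ (Fin n) → EuclideanSpace ℝ (Fin (n + 1)))
  {q f : EuclideanSpace ℝ (Fin n) → ℝ} {u : EuclideanSpace ℝ (Fin n)}

theorem gradIII_eq_neg_inv_smul_gradG (hq : q u ≠ 0) :
    gradIII hinv x f u = -(q u)⁻¹ • gradG hinv x q f u := by
  simp only [gradIII, gradG, Finset.smul_sum, smul_smul, ← neg_smul, ← Finset.sum_neg_distrib]
  refine Finset.sum_congr rfl fun i _ => Finset.sum_congr rfl fun j _ => ?_
  congr 1
  field_simp

theorem gradG_congr_of_eventuallyEq {g : EuclideanSpace ℝ (Fin n) → ℝ} (hfg : f =ᶠ[𝓝 u] g) :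
    gradG hinv x q f u = gradG hinv x q g u := by
  simp only [gradG, pd_congr_of_eventuallyEq hfg]

theorem gradG_eq_of_pd_eq {g₁ g₂ : EuclideanSpace ℝ (Fin n) → ℝ} {a b : ℝ}
    (hf : ∀ i, pd f i u = a * pd g₁ i u + b * pd g₂ i u) :
    gradG hinv x q f u = a • gradG hinv x q g₁ u + b • gradG hinv x q g₂ u := by
  simp only [gradG, hf, Finset.smul_sum, smul_smul, ← Finset.sum_add_distrib, ← add_smul]
  congr! 3 with i - j -
  ring

theorem tcheb_eq_gradG_log {K : EuclideanSpace ℝ (Fin n) → ℝ}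
    (hK : DifferentiableAt ℝ K u) (hK0 : K u ≠ 0)
    (hq : DifferentiableAt ℝ q u) (hq0 : q u ≠ 0) :
    tcheb hinv x K q u = gradG hinv x q (fun v => -(1 / (2 * (n : ℝ))) * Real.log (K v)
      + (((n : ℝ) + 2) / (2 * (n : ℝ))) * Real.log (q v)) u := by
  rw [gradG_eq_of_pd_eq hinv x (pd_const_mul_log_add_const_mul_log _ _ hK hK0 hq hq0), tcheb,
    gradIII_eq_neg_inv_smul_gradG hinv x hq0, gradIII_eq_neg_inv_smul_gradG hinv x hq0]
  match_scalars <;> field_simp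

theorem lower_index_eq_pd_of_gradG_eq {h : EuclideanSpace ℝ (Fin n) → Matrix (Fin n) (Fin n) ℝ}
    (hsymm : (h u).IsSymm) (hhinv : h u * hinv u = 1) (hq : q u ≠ 0)
    (hind : LinearIndependent ℝ (fun j : Fin n => pdv x j u)) {T : Fin n → ℝ}
    (hT : gradG hinv x q f u = ∑ j, T j • pdv x j u) (i : Fin n) :
    ∑ j, (q u)⁻¹ * h u i j * T j = pd f i u := by
  set w : Fin n → ℝ := fun k => pd f k u
  have hcoord (j : Fin n) : T j = q u * (w ᵥ* hinv u) j := by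
    refine Fintype.linearIndependent_iffₛ.1 hind T (fun j => q u * (w ᵥ* hinv u) j)
      (hT.symm.trans ?_) j
    rw [gradG, Finset.sum_comm]
    refine Finset.sum_congr rfl fun j _ => ?_
    simp only [← Finset.sum_smul, w, vecMul, dotProduct, Finset.mul_sum]
    congr! 2 with k
    ring
  calc ∑ j, (q u)⁻¹ * h u i j * T j = (h u *ᵥ (w ᵥ* hinv u)) i := by
        simp only [hcoord, mulVec, dotProduct]
        congr! 1 with j
        field_simp
    _ = w i := by rw [hsymm.mulVec_vecMul_of_mul_eq_one hhinv]

end Gradients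

theorem tchebychev_is_G_gradient_general {n : ℕ}
    (U : Set (EuclideanSpace ℝ (Fin n))) (hUo : IsOpen U)
    (x : EuclideanSpace ℝ (Fin n) → EuclideanSpace ℝ (Fin (n + 1)))
    (h hinv : EuclideanSpace ℝ (Fin n) → Matrix (Fin n) (Fin n) ℝ)
    (K q : EuclideanSpace ℝ (Fin n) → ℝ)
    (φ : EuclideanSpace ℝ (Fin n) → ℝ)
    (hφ : ∀ u, φ u = |K u| ^ (-(1 / (2 * (n : ℝ)))) *
        |q u| ^ (((n : ℝ) + 2) / (2 * (n : ℝ))))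
    (hind : ∀ u ∈ U, LinearIndependent ℝ (fun j : Fin n => pdv x j u))
    (hsymm : ∀ u ∈ U, (h u).IsSymm)
    (hhinv : ∀ u ∈ U, h u * hinv u = 1)
    (hK : ContDiffOn ℝ 2 K U) (hK0 : ∀ u ∈ U, K u ≠ 0)
    (hq : ContDiffOn ℝ 2 q U) (hq0 : ∀ u ∈ U, q u ≠ 0)
    -- `Tcomp` gives the components of `T̄` in the tangent basis:
    (Tcomp : EuclideanSpace ℝ (Fin n) → Fin n → ℝ)
    (hTcomp : ∀ u ∈ U, tcheb hinv x K q u = ∑ j, Tcomp u j • pdv x j u) :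
    (∀ u ∈ U, tcheb hinv x K q u
        = ∑ i, ∑ j, (q u * hinv u i j *
            pd (fun v => Real.log (φ v)) i u) • pdv x j u) ∧
    (∀ u ∈ U, ∀ i, (∑ j, (q u)⁻¹ * h u i j * Tcomp u j)
        = pd (fun v => Real.log (φ v)) i u) ∧
    (∀ u ∈ U, ∀ i j,
      pd (fun v => ∑ k, (q v)⁻¹ * h v i k * Tcomp v k) j u
        = pd (fun v => ∑ k, (q v)⁻¹ * h v j k * Tcomp v k) i u) := by
  have hnhds {u} (hu : u ∈ U) : U ∈ 𝓝 u := hUo.mem_nhds hu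
  have hlogφ {u} (hu : u ∈ U) : (fun v => Real.log (φ v)) =ᶠ[𝓝 u] fun v =>
      -(1 / (2 * (n : ℝ))) * Real.log (K v) + (((n : ℝ) + 2) / (2 * (n : ℝ))) * Real.log (q v) := by
    filter_upwards [hnhds hu] with v hv
    rw [hφ, Real.log_abs_rpow_mul_abs_rpow (hK0 v hv) (hq0 v hv)]
  have hgrad : ∀ u ∈ U, tcheb hinv x K q u = gradG hinv x q (fun v => Real.log (φ v)) u := by
    intro u hu
    rw [gradG_congr_of_eventuallyEq hinv x (hlogφ hu)]
    exact tcheb_eq_gradG_log hinv x ((hK.contDiffAt (hnhds hu)).differentiableAt two_ne_zero)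
      (hK0 u hu) ((hq.contDiffAt (hnhds hu)).differentiableAt two_ne_zero) (hq0 u hu)
  have hlower : ∀ u ∈ U, ∀ i, ∑ j, (q u)⁻¹ * h u i j * Tcomp u j
      = pd (fun v => Real.log (φ v)) i u := fun u hu =>
    lower_index_eq_pd_of_gradG_eq hinv x (hsymm u hu) (hhinv u hu) (hq0 u hu) (hind u hu)
      ((hgrad u hu).symm.trans (hTcomp u hu))
  refine ⟨hgrad, hlower, fun u hu i j => pd_comm_of_eqOn_pd hUo hu ?_ hlower i j⟩
  exact ((contDiffAt_const.mul ((hK.contDiffAt (hnhds hu)).log (hK0 u hu))).add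
    (contDiffAt_const.mul ((hq.contDiffAt (hnhds hu)).log (hq0 u hu)))).congr_of_eventuallyEq
    (hlogφ hu)

/-- the Tchebychev field
`T̄ = (q/(2nK))∇^{III}(K, ξ̄) − ((n+2)/(2n))∇^{III}(q, ξ̄)` of any relative
normalization is a `G`-gradient: `T̄ = ∇^G(ln φ, x̄)` with
`φ = |K|^{−1/(2n)}·|q|^{(n+2)/(2n)}` and `G^{ij} = q·h^{ij}`; equivalently,
the 1-form `ωᵢ = G_{ij}T^j` obtained by lowering the index of `T̄ = T^j x̄_{/j}`
with `G_{ij} = q^{-1}h_{ij}` equals `d(ln φ)`, and is therefore closed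
(`∂_j ωᵢ = ∂ᵢ ω_j`): `T̄` is irrotational with respect to `G`. -/
theorem tchebychev_is_G_gradient {n : ℕ} (hn : 0 < n)
    (U : Set (EuclideanSpace ℝ (Fin n))) (hUo : IsOpen U)
    (x ξ : EuclideanSpace ℝ (Fin n) → EuclideanSpace ℝ (Fin (n + 1)))
    (h hinv : EuclideanSpace ℝ (Fin n) → Matrix (Fin n) (Fin n) ℝ)
    (K q : EuclideanSpace ℝ (Fin n) → ℝ)
    (φ : EuclideanSpace ℝ (Fin n) → ℝ)
    (hφ : ∀ u, φ u = |K u| ^ (-(1 / (2 * (n : ℝ)))) *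
        |q u| ^ (((n : ℝ) + 2) / (2 * (n : ℝ))))
    (hind : ∀ u ∈ U, LinearIndependent ℝ (fun j : Fin n => pdv x j u))
    (hsymm : ∀ u ∈ U, (h u).IsSymm)
    (hhinv : ∀ u ∈ U, h u * hinv u = 1)
    (hK : ContDiffOn ℝ 2 K U) (hK0 : ∀ u ∈ U, K u ≠ 0)
    (hq : ContDiffOn ℝ 2 q U) (hq0 : ∀ u ∈ U, q u ≠ 0)
    -- `Tcomp` gives the components of `T̄` in the tangent basis:
    (Tcomp : EuclideanSpace ℝ (Fin n) → Fin n → ℝ)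
    (hTcomp : ∀ u ∈ U, tcheb hinv x K q u = ∑ j, Tcomp u j • pdv x j u) :
    (∀ u ∈ U, tcheb hinv x K q u
        = ∑ i, ∑ j, (q u * hinv u i j *
            pd (fun v => Real.log (φ v)) i u) • pdv x j u) ∧
    (∀ u ∈ U, ∀ i, (∑ j, (q u)⁻¹ * h u i j * Tcomp u j)
        = pd (fun v => Real.log (φ v)) i u) ∧
    (∀ u ∈ U, ∀ i j,
      pd (fun v => ∑ k, (q v)⁻¹ * h v i k * Tcomp v k) j u
        = pd (fun v => ∑ k, (q v)⁻¹ * h v j k * Tcomp v k) i u) :=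
  tchebychev_is_G_gradient_general U hUo x h hinv K q φ hφ hind hsymm hhinv hK hK0 hq hq0 Tcomp
    hTcomp
end
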